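/- arXiv:1306.3859 — 7 statements merged into one kernel-verified Lean document; each statement's English description precedes it below -/
import Mathlib

section
/- Let M be a coalgebra over a commutative ring K and let v ∈ (M⊗M)* be any bilinear form. Then the following two identities of linear maps M⊗M → M⊗M⊗M hold: (v̂ ⊗ id_M) ∘ (id_M ⊗ μ) = (id_M ⊗ μ) ∘ v̂, and (id_M ⊗ v̂) ∘ (p₂₁ ⊗ id_M) ∘ (id_M ⊗ μ) = (μ ⊗ id_M) ∘ v̂, where p₂₁ is the flip of the first two tensor factors. -/
open TensorProduct

namespace PG

variable {K : Type} [CommRing K]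

section Coalgebra

variable {M : Type} [AddCommGroup M] [Module K M]

/-- Coassociativity of a comultiplication `μ : M → M ⊗ M`. -/
def Coassoc (μ : M →ₗ[K] M ⊗[K] M) : Prop :=
  (TensorProduct.assoc K M M M).toLinearMap ∘ₗ (μ.rTensor M) ∘ₗ μ = (μ.lTensor M) ∘ₗ μ

/-- The iterated comultiplication `μ² : M → M ⊗ (M ⊗ M)`. -/
noncomputable def comul2 (μ : M →ₗ[K] M ⊗[K] M) : M →ₗ[K] M ⊗[K] (M ⊗[K] M) :=
  (μ.lTensor M) ∘ₗ μ

/-- The flip `p₂₁ : M ⊗ M → M ⊗ M`. -/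
noncomputable def flipT (K M : Type) [CommRing K] [AddCommGroup M] [Module K M] :
    M ⊗[K] M →ₗ[K] M ⊗[K] M :=
  (TensorProduct.comm K M M).toLinearMap

/-- The map `v̂ : M ⊗ M → M ⊗ M`, `v̂(α ⊗ β) = v(α ⊗ β²) β¹ ⊗ β³`, associated with a
bilinear form `v` on a coalgebra `(M, μ)`. -/
noncomputable def hat (μ : M →ₗ[K] M ⊗[K] M) (v : M ⊗[K] M →ₗ[K] K) :
    M ⊗[K] M →ₗ[K] M ⊗[K] M :=
  (LinearMap.lTensor M (TensorProduct.lid K M).toLinearMap)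
  ∘ₗ (LinearMap.lTensor M (LinearMap.rTensor M v))
  ∘ₗ (LinearMap.lTensor M (TensorProduct.assoc K M M M).symm.toLinearMap)
  ∘ₗ (TensorProduct.assoc K M M (M ⊗[K] M)).toLinearMap
  ∘ₗ (LinearMap.rTensor (M ⊗[K] M) (TensorProduct.comm K M M).toLinearMap)
  ∘ₗ (TensorProduct.assoc K M M (M ⊗[K] M)).symm.toLinearMap
  ∘ₗ (LinearMap.lTensor M (comul2 μ))

/-- A bilinear form `v` on a coalgebra `(M, μ)` is cyclic if `v̂` commutes with the flip. -/
noncomputable def IsCyclic (μ : M →ₗ[K] M ⊗[K] M) (v : M ⊗[K] M →ₗ[K] K) : Prop :=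
  (hat μ v) ∘ₗ flipT K M = flipT K M ∘ₗ (hat μ v)

/-- `ε : M → K` is a counit for the comultiplication `μ`. -/
def IsCounit (μ : M →ₗ[K] M ⊗[K] M) (ε : M →ₗ[K] K) : Prop :=
  ∀ α : M, (TensorProduct.lid K M) ((ε.rTensor M) (μ α)) = α ∧
    (TensorProduct.rid K M) ((ε.lTensor M) (μ α)) = α

/-- The convolution product on the dual of a coalgebra: `(f * g)(α) = f(α¹) g(α²)`. -/
noncomputable def conv (μ : M →ₗ[K] M ⊗[K] M) (f g : M →ₗ[K] K) : M →ₗ[K] K :=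
  (LinearMap.mul' K K) ∘ₗ (TensorProduct.map f g) ∘ₗ μ

/-- The inner action `α ↦ w(α¹) α² u(α³)` of a pair of dual elements on a coalgebra
(for `w = u⁻¹`, this is the inner automorphism `ᵘα`). -/
noncomputable def innerAct (μ : M →ₗ[K] M ⊗[K] M) (w u : M →ₗ[K] K) : M →ₗ[K] M :=
  (TensorProduct.rid K M).toLinearMap
  ∘ₗ (TensorProduct.lid K (M ⊗[K] K)).toLinearMap
  ∘ₗ (TensorProduct.map w (LinearMap.lTensor M u))
  ∘ₗ (LinearMap.lTensor M μ) ∘ₗ μ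

/-- The inner coderivation `δ_φ(α) = φ(α²) α¹ − φ(α¹) α²` associated with `φ ∈ M*`. -/
noncomputable def innerCoder (μ : M →ₗ[K] M ⊗[K] M) (φ : M →ₗ[K] K) : M →ₗ[K] M :=
  ((TensorProduct.rid K M).toLinearMap ∘ₗ (LinearMap.lTensor M φ) ∘ₗ μ)
  - ((TensorProduct.lid K M).toLinearMap ∘ₗ (φ.rTensor M) ∘ₗ μ)

/-- A coderivation of the coalgebra `(M, μ)`. -/
def IsCoderivation (μ : M →ₗ[K] M ⊗[K] M) (δ : M →ₗ[K] M) : Prop :=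
  μ ∘ₗ δ = (δ.rTensor M + δ.lTensor M) ∘ₗ μ

/-- `D ⊗ id` as an endomorphism of `N ⊗ (N ⊗ N)`, for an endomorphism `D` of `N ⊗ N`. -/
noncomputable def tend12 {N : Type} [AddCommGroup N] [Module K N]
    (D : N ⊗[K] N →ₗ[K] N ⊗[K] N) :
    N ⊗[K] (N ⊗[K] N) →ₗ[K] N ⊗[K] (N ⊗[K] N) :=
  (TensorProduct.assoc K N N N).toLinearMap ∘ₗ (LinearMap.rTensor N D)
    ∘ₗ (TensorProduct.assoc K N N N).symm.toLinearMap

end Coalgebra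

end PG

section Aux0

open TensorProduct LinearMap

variable {K M : Type} [CommRing K] [AddCommGroup M] [Module K M]

/-- The contraction `c ⊗ d ↦ v(α ⊗ c) • d`. -/
noncomputable def Cv0 (v : M ⊗[K] M →ₗ[K] K) (α : M) : M ⊗[K] M →ₗ[K] M :=
  (TensorProduct.lid K M).toLinearMap
    ∘ₗ LinearMap.rTensor M (v ∘ₗ TensorProduct.mk K M M α)

/-- The contraction `c ⊗ t ↦ v(α ⊗ c) • t`. -/
noncomputable def CvMM0 (v : M ⊗[K] M →ₗ[K] K) (α : M) :
    M ⊗[K] (M ⊗[K] M) →ₗ[K] M ⊗[K] M :=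
  (TensorProduct.lid K (M ⊗[K] M)).toLinearMap
    ∘ₗ LinearMap.rTensor (M ⊗[K] M) (v ∘ₗ TensorProduct.mk K M M α)

lemma E2 (α : M) :
    (TensorProduct.assoc K M M M).symm.toLinearMap
        ∘ₗ TensorProduct.mk K M (M ⊗[K] M) α
      = LinearMap.rTensor M (TensorProduct.mk K M M α) := by
  ext x y; simp

lemma E3 {N N' : Type} [AddCommGroup N] [Module K N] [AddCommGroup N'] [Module K N']
    (f : N →ₗ[K] N') (α : M) :
    LinearMap.lTensor M f ∘ₗ TensorProduct.mk K M N α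
      = TensorProduct.mk K M N' α ∘ₗ f := by
  ext n; simp

lemma E4 (f : M →ₗ[K] M) :
    (TensorProduct.assoc K M M M).toLinearMap
        ∘ₗ LinearMap.rTensor M (LinearMap.lTensor M f)
        ∘ₗ (TensorProduct.assoc K M M M).symm.toLinearMap
      = LinearMap.lTensor M (LinearMap.rTensor M f) := by
  ext b c d; simp

lemma E5a (v : M ⊗[K] M →ₗ[K] K) (α : M) :
    LinearMap.rTensor M (Cv0 v α) ∘ₗ (TensorProduct.assoc K M M M).symm.toLinearMap
      = CvMM0 v α := by
  ext c d e; simp [Cv0, CvMM0, TensorProduct.smul_tmul']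

lemma E5b (μ : M →ₗ[K] M ⊗[K] M) (v : M ⊗[K] M →ₗ[K] K) (α : M) :
    CvMM0 v α ∘ₗ LinearMap.lTensor M μ = μ ∘ₗ Cv0 v α := by
  ext c d; simp [Cv0, CvMM0]

lemma E6 (α : M) :
    PG.flipT K M ∘ₗ TensorProduct.mk K M M α = (TensorProduct.mk K M M).flip α := by
  ext b; simp [PG.flipT]

lemma E7 (α : M) :
    (TensorProduct.assoc K M M M).toLinearMap
        ∘ₗ LinearMap.rTensor M ((TensorProduct.mk K M M).flip α)
      = LinearMap.lTensor M (TensorProduct.mk K M M α) := by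
  ext b e; simp

lemma E8 (g : M →ₗ[K] M) :
    (TensorProduct.assoc K M M M).toLinearMap
        ∘ₗ LinearMap.lTensor (M ⊗[K] M) g
        ∘ₗ (TensorProduct.assoc K M M M).symm.toLinearMap
      = LinearMap.lTensor M (LinearMap.lTensor M g) := by
  ext b c d; simp

lemma HL (v : M ⊗[K] M →ₗ[K] K) (α : M) :
    ((LinearMap.lTensor M (TensorProduct.lid K M).toLinearMap)
      ∘ₗ (LinearMap.lTensor M (LinearMap.rTensor M v))
      ∘ₗ (LinearMap.lTensor M (TensorProduct.assoc K M M M).symm.toLinearMap)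
      ∘ₗ (TensorProduct.assoc K M M (M ⊗[K] M)).toLinearMap
      ∘ₗ (LinearMap.rTensor (M ⊗[K] M) (TensorProduct.comm K M M).toLinearMap)
      ∘ₗ (TensorProduct.assoc K M M (M ⊗[K] M)).symm.toLinearMap)
        ∘ₗ TensorProduct.mk K M (M ⊗[K] (M ⊗[K] M)) α
      = LinearMap.lTensor M (Cv0 v α) := by
  ext b c d
  simp [Cv0, TensorProduct.smul_tmul']

lemma Hhat (μ : M →ₗ[K] M ⊗[K] M) (v : M ⊗[K] M →ₗ[K] K) (α : M) :
    PG.hat μ v ∘ₗ TensorProduct.mk K M M α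
      = LinearMap.lTensor M (Cv0 v α) ∘ₗ PG.comul2 μ := by
  ext β
  have h := LinearMap.congr_fun (HL (M := M) v α) (PG.comul2 μ β)
  simp only [LinearMap.comp_apply, TensorProduct.mk_apply] at h ⊢
  rw [PG.hat]
  simp only [LinearMap.comp_apply, LinearMap.lTensor_tmul]
  exact h

lemma hmu' {μ : M →ₗ[K] M ⊗[K] M} (hμ : PG.Coassoc μ) :
    μ.rTensor M ∘ₗ μ
      = (TensorProduct.assoc K M M M).symm.toLinearMap ∘ₗ PG.comul2 μ := by
  rw [PG.comul2, ← hμ, ← LinearMap.comp_assoc, ← LinearMap.comp_assoc]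
  simp [← LinearMap.comp_assoc]

lemma T1' {μ : M →ₗ[K] M ⊗[K] M} (hμ : PG.Coassoc μ) (v : M ⊗[K] M →ₗ[K] K) (α : M) :
    LinearMap.rTensor M (Cv0 v α ∘ₗ μ) ∘ₗ μ = μ ∘ₗ Cv0 v α ∘ₗ μ := by
  rw [LinearMap.rTensor_comp, LinearMap.comp_assoc, hmu' hμ,
    ← LinearMap.comp_assoc, E5a, PG.comul2, ← LinearMap.comp_assoc, E5b,
    LinearMap.comp_assoc]

lemma T1 {μ : M →ₗ[K] M ⊗[K] M} (hμ : PG.Coassoc μ) (v : M ⊗[K] M →ₗ[K] K) (α : M) :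
    PG.tend12 (PG.hat μ v) ∘ₗ TensorProduct.mk K M (M ⊗[K] M) α ∘ₗ μ
      = LinearMap.lTensor M μ ∘ₗ LinearMap.lTensor M (Cv0 v α) ∘ₗ PG.comul2 μ := by
  ext β
  have e2 := LinearMap.congr_fun (E2 (K := K) (M := M) α) (μ β)
  have e7 := LinearMap.congr_fun (hmu' hμ) β
  have e4 := LinearMap.congr_fun (E4 (Cv0 v α ∘ₗ μ)) (PG.comul2 μ β)
  simp only [LinearMap.comp_apply, TensorProduct.mk_apply, LinearEquiv.coe_coe] at e2 e7 e4 ⊢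
  rw [PG.tend12]
  simp only [LinearMap.comp_apply, LinearEquiv.coe_coe]
  rw [e2, ← LinearMap.rTensor_comp_apply, Hhat, LinearMap.rTensor_comp_apply]
  nth_rewrite 1 [PG.comul2]
  rw [LinearMap.rTensor_comp_apply, e7, ← LinearMap.rTensor_comp_apply,
    ← LinearMap.lTensor_comp, e4]
  -- goal : lTensor (rTensor (Cv0∘μ)) (comul2 β) = lTensor μ (lTensor Cv0 (comul2 β))
  rw [PG.comul2]
  simp only [LinearMap.comp_apply, ← LinearMap.lTensor_comp_apply, ← LinearMap.comp_assoc]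
  rw [LinearMap.comp_assoc, T1' hμ v α]

lemma T2 {μ : M →ₗ[K] M ⊗[K] M} (hμ : PG.Coassoc μ) (v : M ⊗[K] M →ₗ[K] K) (α : M) :
    LinearMap.lTensor M (PG.hat μ v) ∘ₗ PG.tend12 (PG.flipT K M)
        ∘ₗ TensorProduct.mk K M (M ⊗[K] M) α ∘ₗ μ
      = (TensorProduct.assoc K M M M).toLinearMap ∘ₗ LinearMap.rTensor M μ
          ∘ₗ LinearMap.lTensor M (Cv0 v α) ∘ₗ PG.comul2 μ := by
  ext β
  have e2 := LinearMap.congr_fun (E2 (K := K) (M := M) α) (μ β)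
  have e7 := LinearMap.congr_fun (E7 (K := K) (M := M) α) (μ β)
  have emu := LinearMap.congr_fun (hmu' hμ) β
  have e8 := LinearMap.congr_fun (E8 (Cv0 v α ∘ₗ μ)) (PG.comul2 μ β)
  have emap := LinearMap.congr_fun (LinearMap.rTensor_comp_lTensor _ μ (Cv0 v α))
    (PG.comul2 μ β)
  have emap2 : TensorProduct.map μ (Cv0 v α) ((PG.comul2 μ) β)
      = TensorProduct.map μ (Cv0 v α ∘ₗ μ) (μ β) := by
    rw [PG.comul2, LinearMap.comp_apply,
      ← LinearMap.comp_apply (TensorProduct.map μ (Cv0 v α)), LinearMap.map_comp_lTensor]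
  have emap3 := LinearMap.congr_fun
    (LinearMap.lTensor_comp_rTensor _ μ (Cv0 v α ∘ₗ μ)).symm (μ β)
  simp only [LinearMap.comp_apply, TensorProduct.mk_apply, LinearEquiv.coe_coe]
    at e2 e7 emu e8 emap emap2 emap3 ⊢
  rw [PG.tend12]
  simp only [LinearMap.comp_apply, LinearEquiv.coe_coe]
  rw [e2, ← LinearMap.rTensor_comp_apply, E6, e7, ← LinearMap.lTensor_comp_apply, Hhat]
  -- LHS is now lTensor (lTensor Cv0 ∘ comul2) (μ β); normalize it
  conv_lhs => rw [PG.comul2, ← LinearMap.comp_assoc, ← LinearMap.lTensor_comp,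
    LinearMap.lTensor_comp_apply]
  -- LHS : lTensor (lTensor (Cv0∘μ)) (lTensor μ (μ β))
  rw [emap, emap2, emap3, emu, e8, PG.comul2, LinearMap.comp_apply]

end Aux0
/-- For any bilinear form `v` on a coalgebra `(M, μ)`:
`(v̂ ⊗ id) ∘ (id ⊗ μ) = (id ⊗ μ) ∘ v̂` and
`(id ⊗ v̂) ∘ (p₂₁ ⊗ id) ∘ (id ⊗ μ) = (μ ⊗ id) ∘ v̂`. -/
theorem statement_0 {K M : Type} [CommRing K] [AddCommGroup M] [Module K M]
    (μ : M →ₗ[K] M ⊗[K] M) (hμ : PG.Coassoc μ) (v : M ⊗[K] M →ₗ[K] K) :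
    (PG.tend12 (PG.hat μ v) ∘ₗ (LinearMap.lTensor M μ)
      = (LinearMap.lTensor M μ) ∘ₗ PG.hat μ v)
    ∧
    ((LinearMap.lTensor M (PG.hat μ v)) ∘ₗ PG.tend12 (PG.flipT K M)
        ∘ₗ (LinearMap.lTensor M μ)
      = (TensorProduct.assoc K M M M).toLinearMap ∘ₗ (LinearMap.rTensor M μ)
          ∘ₗ PG.hat μ v) := by
  constructor
  · apply TensorProduct.ext'
    intro α β
    have t1 := LinearMap.congr_fun (T1 hμ v α) β
    have hα := LinearMap.congr_fun (Hhat μ v α) β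
    simp only [LinearMap.comp_apply, TensorProduct.mk_apply, LinearMap.lTensor_tmul]
      at t1 hα ⊢
    rw [hα]
    exact t1
  · apply TensorProduct.ext'
    intro α β
    have t2 := LinearMap.congr_fun (T2 hμ v α) β
    have hα := LinearMap.congr_fun (Hhat μ v α) β
    simp only [LinearMap.comp_apply, TensorProduct.mk_apply, LinearMap.lTensor_tmul,
      LinearEquiv.coe_coe] at t2 hα ⊢
    rw [hα]
    exact t2
end

section
/- Let 𝒜 be a symmetric Frobenius algebra over a commutative ring K with Frobenius pairing (−,−). Then for every α ∈ 𝒜* there is a unique element ᾱ ∈ 𝒜 with α(a) = (a, ᾱ) for all a ∈ 𝒜; the map 𝒜* → 𝒜, α ↦ ᾱ, is a cyclic structure on 𝒜, i.e. α(a β̄ b) = β(b ᾱ a) for all α, β ∈ 𝒜* and a, b ∈ 𝒜; and the bilinear form v on the dual coalgebra 𝒜* defined by v(α⊗β) = β(ᾱ) = (ᾱ, β̄) is a cyclic bilinear form. -/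
open TensorProduct

set_option maxHeartbeats 1000000 in
set_option synthInstance.maxHeartbeats 400000 in
/-- for a symmetric Frobenius algebra `(𝓐, b)`: every `α ∈ 𝓐*` has a unique
`ᾱ ∈ 𝓐` with `α(a) = b(a, ᾱ)`; the map `α ↦ ᾱ` is a cyclic structure on `𝓐`
(`α(a β̄ b) = β(b ᾱ a)`); and the induced bilinear form `v(α ⊗ β) = β(ᾱ) = b(ᾱ, β̄)` on the
dual coalgebra `𝓐*` is cyclic. -/
theorem statement_5 {K 𝓐 : Type} [CommRing K] [NonUnitalRing 𝓐] [Module K 𝓐]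
    [SMulCommClass K 𝓐 𝓐] [IsScalarTower K 𝓐 𝓐] [Module.Free K 𝓐] [Module.Finite K 𝓐]
    (b : 𝓐 →ₗ[K] 𝓐 →ₗ[K] K)
    (hnd : Function.Bijective fun a : 𝓐 => b a)
    (hfrob : ∀ x y z : 𝓐, b (x * y) z = b x (y * z))
    (hsymm : ∀ x y : 𝓐, b x y = b y x) :
    (∀ α : Module.Dual K 𝓐, ∃! x : 𝓐, ∀ a : 𝓐, α a = b a x) ∧
    (∃ f : Module.Dual K 𝓐 →ₗ[K] 𝓐, ∀ (α : Module.Dual K 𝓐) (a : 𝓐), α a = b a (f α)) ∧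
    (∀ f : Module.Dual K 𝓐 →ₗ[K] 𝓐, (∀ (α : Module.Dual K 𝓐) (a : 𝓐), α a = b a (f α)) →
      (∀ (α β : Module.Dual K 𝓐) (x y : 𝓐), α (x * f β * y) = β (y * f α * x)) ∧
      (∀ α β : Module.Dual K 𝓐, β (f α) = b (f α) (f β)) ∧
      PG.IsCyclic
        ((TensorProduct.dualDistribEquiv K 𝓐 𝓐).symm.toLinearMap ∘ₗ
          (LinearMap.mul' K 𝓐).dualMap)
        (TensorProduct.lift ((Module.Dual.eval K 𝓐) ∘ₗ f))) := by
  set e := LinearEquiv.ofBijective b hnd with hedef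
  have he : ∀ x : 𝓐, e x = b x := fun x => LinearEquiv.ofBijective_apply _ _
  have hb : ∀ α, b (e.symm α) = α := fun α => by rw [← he, e.apply_symm_apply]
  have huniq : ∀ x y : 𝓐, (∀ a, b a x = b a y) → x = y := by
    intro x y h
    apply hnd.injective
    ext a
    simp only
    rw [hsymm x a, hsymm y a]
    exact h a
  refine ⟨?_, ⟨e.symm.toLinearMap, ?_⟩, ?_⟩
  · intro α
    refine ⟨e.symm α, fun a => by rw [hsymm, hb], fun y hy => ?_⟩
    apply huniq
    intro a
    rw [← hy a, hsymm, hb]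
  · intro α a
    exact (by rw [hsymm, hb] : α a = b a (e.symm α))
  · intro f hf
    have hcyc : ∀ (α β : Module.Dual K 𝓐) (x y : 𝓐),
        α (x * f β * y) = β (y * f α * x) := by
      intro α β x y
      rw [hf α, hf β, hfrob (x * f β) y (f α), hfrob (y * f α) x (f β),
        hsymm (y * f α)]
    refine ⟨hcyc, fun α β => hf β (f α), ?_⟩
    set D := Module.Dual K 𝓐 with hD
    set E := TensorProduct.dualDistribEquiv K 𝓐 𝓐 with hE
    set μ : D →ₗ[K] D ⊗[K] D :=
      E.symm.toLinearMap ∘ₗ (LinearMap.mul' K 𝓐).dualMap with hμdef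
    set v : D ⊗[K] D →ₗ[K] K :=
      TensorProduct.lift ((Module.Dual.eval K 𝓐) ∘ₗ f) with hvdef
    have hEtmul : ∀ (φ ψ : D) (a c : 𝓐), E (φ ⊗ₜ ψ) (a ⊗ₜ c) = φ a * ψ c := by
      intro φ ψ a c
      simp [hE, TensorProduct.dualDistribEquiv]
    have hμ : ∀ (γ : D) (a c : 𝓐), E (μ γ) (a ⊗ₜ c) = γ (a * c) := by
      intro γ a c
      simp only [hμdef, LinearMap.coe_comp, Function.comp_apply, LinearEquiv.coe_coe,
        LinearEquiv.apply_symm_apply]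
      rfl
    have hv : ∀ (α ψ : D), v (α ⊗ₜ ψ) = ψ (f α) := by
      intro α ψ
      simp only [hvdef, TensorProduct.lift.tmul, LinearMap.coe_comp, Function.comp_apply]
      rfl
    set C : D ⊗[K] (D ⊗[K] (D ⊗[K] D)) →ₗ[K] D ⊗[K] D :=
      (LinearMap.lTensor D (TensorProduct.lid K D).toLinearMap)
      ∘ₗ (LinearMap.lTensor D (LinearMap.rTensor D v))
      ∘ₗ (LinearMap.lTensor D (TensorProduct.assoc K D D D).symm.toLinearMap)
      ∘ₗ (TensorProduct.assoc K D D (D ⊗[K] D)).toLinearMap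
      ∘ₗ (LinearMap.rTensor (D ⊗[K] D) (TensorProduct.comm K D D).toLinearMap)
      ∘ₗ (TensorProduct.assoc K D D (D ⊗[K] D)).symm.toLinearMap with hCdef
    have hhat : ∀ x : D ⊗[K] D, PG.hat μ v x = C ((PG.comul2 μ).lTensor D x) :=
      fun x => rfl
    have hCpure : ∀ (α φ ψ χ : D), C (α ⊗ₜ (φ ⊗ₜ (ψ ⊗ₜ χ))) = ψ (f α) • (φ ⊗ₜ χ) := by
      intro α φ ψ χ
      simp only [hCdef, LinearMap.coe_comp, Function.comp_apply, LinearEquiv.coe_coe,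
        TensorProduct.assoc_symm_tmul, LinearMap.rTensor_tmul, TensorProduct.comm_tmul,
        TensorProduct.assoc_tmul, LinearMap.lTensor_tmul, TensorProduct.lid_tmul,
        TensorProduct.tmul_smul, hv]
    have key : ∀ (α β : D) (a c : 𝓐),
        E (PG.hat μ v (α ⊗ₜ β)) (a ⊗ₜ c) = β (a * f α * c) := by
      intro α β a c
      rw [mul_assoc, ← hμ β a (f α * c), hhat]
      have h0 : (PG.comul2 μ).lTensor D (α ⊗ₜ β) = α ⊗ₜ ((μ.lTensor D) (μ β)) := rfl
      rw [h0]
      generalize μ β = s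
      induction s using TensorProduct.induction_on with
      | zero =>
        simp only [map_zero, TensorProduct.tmul_zero, LinearMap.zero_apply]
      | tmul φ ψ =>
        rw [LinearMap.lTensor_tmul, hEtmul, ← hμ ψ (f α) c]
        generalize μ ψ = t
        induction t using TensorProduct.induction_on with
        | zero =>
          simp only [map_zero, TensorProduct.tmul_zero, LinearMap.zero_apply, mul_zero]
        | tmul ψ' χ =>
          rw [hCpure, map_smul, LinearMap.smul_apply, hEtmul, hEtmul, smul_eq_mul]
          ring
        | add t₁ t₂ h₁ h₂ =>
          simp only [TensorProduct.tmul_add, map_add, LinearMap.add_apply, h₁, h₂, mul_add]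
      | add s₁ s₂ h₁ h₂ =>
        simp only [TensorProduct.tmul_add, map_add, LinearMap.add_apply, h₁, h₂]
    have hflip : ∀ (t : D ⊗[K] D) (a c : 𝓐),
        E (PG.flipT K D t) (a ⊗ₜ c) = E t (c ⊗ₜ a) := by
      intro t a c
      induction t using TensorProduct.induction_on with
      | zero => simp only [map_zero, LinearMap.zero_apply]
      | tmul φ ψ =>
        rw [PG.flipT]
        simp only [LinearEquiv.coe_coe, TensorProduct.comm_tmul, hEtmul]
        ring
      | add t₁ t₂ h₁ h₂ =>
        simp only [map_add, LinearMap.add_apply, h₁, h₂]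
    rw [PG.IsCyclic]
    apply TensorProduct.ext'
    intro α β
    simp only [LinearMap.coe_comp, Function.comp_apply]
    have hfl : PG.flipT K D (α ⊗ₜ β) = β ⊗ₜ α := rfl
    rw [hfl]
    apply E.injective
    apply TensorProduct.ext'
    intro a c
    rw [key β α a c, hflip, key α β c a, hcyc]
end

section
/- Let ⟪−,−⟫ be an n-graded double bracket on a graded algebra A, M a coalgebra, and v a cyclic bilinear form on M. For any coalgebra automorphism ω ∈ Aut(M) and any x, y ∈ A_M, one has ⟨ωx, ωy⟩_v = ω⟨x, y⟩_{v^ω}, where Aut(M) acts on A_M by graded algebra automorphisms via ω·a_α = a_{ω(α)} and v^ω = v∘(ω⊗ω). In particular, the bracket ⟨−,−⟩_v on A_M is preserved by the isotropy group {ω ∈ Aut(M) : v^ω = v}. -/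
open TensorProduct

namespace PG

/-- The sign `(−1)^m` for an integer `m`. -/
def sgn (m : ℤ) : ℤ := (((-1 : ℤˣ) ^ m : ℤˣ) : ℤ)

section Graded

variable {K : Type} [CommRing K]
variable {A : Type} [NonUnitalRing A] [Module K A] [SMulCommClass K A A] [IsScalarTower K A A]

/-- The graded (signed) flip `a ⊗ b ↦ (−1)^{(|a|+n)(|b|+n)} b ⊗ a` on `A ⊗ A`,
for a `ℤ`-graded algebra `(A, 𝒜)`. -/
noncomputable def gflip (𝒜 : ℤ → Submodule K A) [DirectSum.Decomposition 𝒜] (n : ℤ) :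
    A ⊗[K] A →ₗ[K] A ⊗[K] A :=
  (DirectSum.toModule K (ℤ × ℤ) (A ⊗[K] A) fun pq =>
      sgn ((pq.1 + n) * (pq.2 + n)) •
        ((TensorProduct.map (𝒜 pq.2).subtype (𝒜 pq.1).subtype) ∘ₗ
          (TensorProduct.comm K (𝒜 pq.1) (𝒜 pq.2)).toLinearMap))
  ∘ₗ (TensorProduct.directSum K K (fun p : ℤ => 𝒜 p) (fun q : ℤ => 𝒜 q)).toLinearMap
  ∘ₗ (TensorProduct.map (DirectSum.decomposeLinearEquiv 𝒜).toLinearMap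
        (DirectSum.decomposeLinearEquiv 𝒜).toLinearMap)

/-- The degree-`s` part of `A ⊗ A`: the sum of the images of `𝒜 i ⊗ 𝒜 j` with `i + j = s`. -/
noncomputable def grade2 (𝒜 : ℤ → Submodule K A) (s : ℤ) : Submodule K (A ⊗[K] A) :=
  ⨆ i : ℤ, LinearMap.range (TensorProduct.map (𝒜 i).subtype (𝒜 (s - i)).subtype)

/-- An `n`-graded double bracket on a graded algebra `(A, 𝒜)`, given as a bilinear map
`db : A → A → A ⊗ A`: the grading condition, the `n`-graded antisymmetry
`⟪−,−⟫ ∘ P₂₁,ₙ = −P₂₁ ∘ ⟪−,−⟫`, and the `n`-graded Leibniz rule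
`⟪a,bc⟫ = ⟪a,b⟫c + (−1)^{|a|ₙ|b|} b⟪a,c⟫`. -/
structure IsDoubleBracket (𝒜 : ℤ → Submodule K A) [DirectSum.Decomposition 𝒜] (n : ℤ)
    (db : A →ₗ[K] A →ₗ[K] A ⊗[K] A) : Prop where
  grading : ∀ (p q : ℤ) (a b : A), a ∈ 𝒜 p → b ∈ 𝒜 q →
    db a b ∈ grade2 𝒜 (p + q + n)
  antisymm : ∀ (p q : ℤ) (a b : A), a ∈ 𝒜 p → b ∈ 𝒜 q →
    sgn ((p + n) * (q + n)) • db b a = - gflip 𝒜 0 (db a b)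
  leibniz : ∀ (p q : ℤ) (a b c : A), a ∈ 𝒜 p → b ∈ 𝒜 q →
    db a (b * c) = (LinearMap.lTensor A (LinearMap.mulRight K c)) (db a b)
      + sgn ((p + n) * q) • (LinearMap.rTensor A (LinearMap.mulLeft K b)) (db a c)

variable (𝒜 : ℤ → Submodule K A) [DirectSum.Decomposition 𝒜]

/-- The `n`-graded cyclic permutation `P₃₁₂,ₙ = (P₂₁,ₙ ⊗ id) ∘ (id ⊗ P₂₁,ₙ)` on `A ⊗ (A ⊗ A)`. -/
noncomputable def P312 (n : ℤ) : A ⊗[K] (A ⊗[K] A) →ₗ[K] A ⊗[K] (A ⊗[K] A) :=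
  tend12 (gflip 𝒜 n) ∘ₗ LinearMap.lTensor A (gflip 𝒜 n)

/-- The `n`-graded cyclic permutation `P₂₃₁,ₙ = (id ⊗ P₂₁,ₙ) ∘ (P₂₁,ₙ ⊗ id)`, which is the
inverse of `P₃₁₂,ₙ`. -/
noncomputable def P231 (n : ℤ) : A ⊗[K] (A ⊗[K] A) →ₗ[K] A ⊗[K] (A ⊗[K] A) :=
  LinearMap.lTensor A (gflip 𝒜 n) ∘ₗ tend12 (gflip 𝒜 n)

/-- The tribracket `⟪−,−,−⟫ = Σ_{i=0}^{2} P₃₁₂^i (⟪−,−⟫⊗id)(id⊗⟪−,−⟫) P₃₁₂,ₙ^{−i}` induced by an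
`n`-graded double bracket. -/
noncomputable def tribracket (n : ℤ) (db : A →ₗ[K] A →ₗ[K] A ⊗[K] A) :
    A ⊗[K] (A ⊗[K] A) →ₗ[K] A ⊗[K] (A ⊗[K] A) :=
  letI D := TensorProduct.lift db
  letI T := tend12 D ∘ₗ LinearMap.lTensor A D
  T + P312 𝒜 0 ∘ₗ T ∘ₗ P231 𝒜 n
    + P312 𝒜 0 ∘ₗ P312 𝒜 0 ∘ₗ T ∘ₗ P231 𝒜 n ∘ₗ P231 𝒜 n

/-- The submodule `[A,A]` of a graded algebra, spanned by the graded commutators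
`ab − (−1)^{|a||b|} ba` of homogeneous elements. -/
noncomputable def gradedCommutator (𝒜' : ℤ → Submodule K A) : Submodule K A :=
  Submodule.span K {x : A | ∃ (p q : ℤ) (a b : A),
    a ∈ 𝒜' p ∧ b ∈ 𝒜' q ∧ x = a * b - sgn (p * q) • (b * a)}

end Graded

end PG
namespace PG

section RepAlg

variable {K : Type} [CommRing K]
variable {A : Type} [NonUnitalRing A] [Module K A] [SMulCommClass K A A] [IsScalarTower K A A]
variable {M : Type} [AddCommGroup M] [Module K M]
variable {R : Type} [NonUnitalRing R] [Module K R] [SMulCommClass K R R] [IsScalarTower K R R]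

/-- The multiplicativity relation `(ab)_α = a_{α¹} b_{α²}` for a bilinear family
`ρ : A → M → R` of elements of an algebra `R`. -/
def MulRel (μ : M →ₗ[K] M ⊗[K] M) (ρ : A →ₗ[K] M →ₗ[K] R) : Prop :=
  ∀ (a b : A) (α : M),
    ρ (a * b) α = LinearMap.mul' K R (TensorProduct.map (ρ a) (ρ b) (μ α))

/-- The grading condition: `a_α` is homogeneous of degree `|a|`. -/
def GradRel (𝒜 : ℤ → Submodule K A) (ℛ : ℤ → Submodule K R) (ρ : A →ₗ[K] M →ₗ[K] R) : Prop :=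
  ∀ (p : ℤ) (a : A), a ∈ 𝒜 p → ∀ α : M, ρ a α ∈ ℛ p

/-- The generation condition: the symbols `a_α` generate `R` as a (non-unital) algebra. -/
def GenRel (ρ : A →ₗ[K] M →ₗ[K] R) : Prop :=
  NonUnitalAlgebra.adjoin K {x : R | ∃ (a : A) (α : M), ρ a α = x} = ⊤

/-- The universal property of the representation algebra `A_M` among commutative graded
algebras: any bilinear family satisfying the grading and multiplicativity relations in a
commutative graded algebra `B` is induced by a unique graded algebra homomorphism `R → B`. -/
def UnivRelComm (μ : M →ₗ[K] M ⊗[K] M) (𝒜 : ℤ → Submodule K A) (ℛ : ℤ → Submodule K R)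
    (ρ : A →ₗ[K] M →ₗ[K] R) : Prop :=
  ∀ (B : Type) [NonUnitalCommRing B] [Module K B] [SMulCommClass K B B] [IsScalarTower K B B],
  ∀ (ℬ : ℤ → Submodule K B) (σ : A →ₗ[K] M →ₗ[K] B),
    GradRel 𝒜 ℬ σ → MulRel μ σ →
    ∃! F : R →ₙₐ[K] B, (∀ (p : ℤ) (x : R), x ∈ ℛ p → F x ∈ ℬ p) ∧
      ∀ (a : A) (α : M), F (ρ a α) = σ a α

/-- The universal property of the algebra `Ã_M` among all graded algebras. -/
def UnivRelNC (μ : M →ₗ[K] M ⊗[K] M) (𝒜 : ℤ → Submodule K A) (ℛ : ℤ → Submodule K R)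
    (ρ : A →ₗ[K] M →ₗ[K] R) : Prop :=
  ∀ (B : Type) [NonUnitalRing B] [Module K B] [SMulCommClass K B B] [IsScalarTower K B B],
  ∀ (ℬ : ℤ → Submodule K B) (σ : A →ₗ[K] M →ₗ[K] B),
    GradRel 𝒜 ℬ σ → MulRel μ σ →
    ∃! F : R →ₙₐ[K] B, (∀ (p : ℤ) (x : R), x ∈ ℛ p → F x ∈ ℬ p) ∧
      ∀ (a : A) (α : M), F (ρ a α) = σ a α

/-- `(R, ℛ, ρ)` is the representation algebra `A_M` of the graded algebra `(A, 𝒜)` with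
respect to the coalgebra `(M, μ)`: `R` is commutative, the symbols `ρ a α = a_α` satisfy
the defining relations of `A_M`, generate `R`, and `R` has the universal property. -/
structure IsRepAlgebra (μ : M →ₗ[K] M ⊗[K] M) (𝒜 : ℤ → Submodule K A)
    (ℛ : ℤ → Submodule K R) (ρ : A →ₗ[K] M →ₗ[K] R) : Prop where
  comm : ∀ x y : R, x * y = y * x
  mul_rel : MulRel μ ρ
  grad_rel : GradRel 𝒜 ℛ ρ
  gen_rel : GenRel ρ
  univ_rel : UnivRelComm μ 𝒜 ℛ ρ

/-- `(S, 𝒮, ρ)` is the algebra `Ã_M` of the graded algebra `(A, 𝒜)` with respect to the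
coalgebra `(M, μ)`. -/
structure IsTildeRepAlgebra (μ : M →ₗ[K] M ⊗[K] M) (𝒜 : ℤ → Submodule K A)
    (ℛ : ℤ → Submodule K R) (ρ : A →ₗ[K] M →ₗ[K] R) : Prop where
  mul_rel : MulRel μ ρ
  grad_rel : GradRel 𝒜 ℛ ρ
  gen_rel : GenRel ρ
  univ_rel : UnivRelNC μ 𝒜 ℛ ρ

/-- The pairing `(A ⊗ A) ⊗ (M ⊗ M) → R`, `(x ⊗ y) ⊗ (γ ⊗ δ) ↦ x_γ · y_δ`. -/
noncomputable def pair2 (ρ : A →ₗ[K] M →ₗ[K] R) :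
    (A ⊗[K] A) ⊗[K] (M ⊗[K] M) →ₗ[K] R :=
  (LinearMap.mul' K R) ∘ₗ (TensorProduct.map (TensorProduct.lift ρ) (TensorProduct.lift ρ))
    ∘ₗ (TensorProduct.tensorTensorTensorComm K A A M M).toLinearMap

/-- The pairing `(A ⊗ (A ⊗ A)) ⊗ (M ⊗ (M ⊗ M)) → R`,
`(x ⊗ (y ⊗ z)) ⊗ (γ ⊗ (δ ⊗ η)) ↦ x_γ · (y_δ · z_η)`. -/
noncomputable def pair3 (ρ : A →ₗ[K] M →ₗ[K] R) :
    (A ⊗[K] (A ⊗[K] A)) ⊗[K] (M ⊗[K] (M ⊗[K] M)) →ₗ[K] R :=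
  (LinearMap.mul' K R) ∘ₗ (TensorProduct.map (TensorProduct.lift ρ) (pair2 ρ))
    ∘ₗ (TensorProduct.tensorTensorTensorComm K A (A ⊗[K] A) M (M ⊗[K] M)).toLinearMap

/-- An `n`-graded biderivation on a graded algebra `(R, ℛ)`. -/
structure IsBider (ℛ : ℤ → Submodule K R) (n : ℤ) (br : R →ₗ[K] R →ₗ[K] R) : Prop where
  grading : ∀ (p q : ℤ) (x y : R), x ∈ ℛ p → y ∈ ℛ q → br x y ∈ ℛ (p + q + n)
  antisymm : ∀ (p q : ℤ) (x y : R), x ∈ ℛ p → y ∈ ℛ q →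
    br x y = - (sgn ((p + n) * (q + n)) • br y x)
  leibniz : ∀ (p q : ℤ) (x y : R), x ∈ ℛ p → y ∈ ℛ q → ∀ z : R,
    br x (y * z) = br x y * z + sgn ((p + n) * q) • (y * br x z)

/-- The defining formula `⟨a_α, b_β⟩_v = v(α ⊗ β²) ⟪a,b⟫′_{β¹} ⟪a,b⟫″_{β³}` of the bracket
induced on the representation algebra by a double bracket `db` and a bilinear form `v`. -/
noncomputable def BrFormula (μ : M →ₗ[K] M ⊗[K] M) (v : M ⊗[K] M →ₗ[K] K)
    (db : A →ₗ[K] A →ₗ[K] A ⊗[K] A) (ρ : A →ₗ[K] M →ₗ[K] R)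
    (br : R →ₗ[K] R →ₗ[K] R) : Prop :=
  ∀ (a b : A) (α β : M),
    br (ρ a α) (ρ b β) = pair2 ρ ((db a b) ⊗ₜ[K] (hat μ v (α ⊗ₜ[K] β)))

/-- A degree-zero derivation of a graded algebra `(R, ℛ)`. -/
def IsGDer (ℛ : ℤ → Submodule K R) (D : R →ₗ[K] R) : Prop :=
  (∀ (p : ℤ) (x : R), x ∈ ℛ p → D x ∈ ℛ p) ∧ ∀ x y : R, D (x * y) = D x * y + x * D y

/-- The Jacobi form of an `n`-graded bracket, evaluated on elements of degrees `p, q, r`. -/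
noncomputable def jacobiForm (n : ℤ) (br : R →ₗ[K] R →ₗ[K] R) (p q r : ℤ) (x y z : R) : R :=
  sgn ((p + n) * (r + n)) • br x (br y z) + sgn ((q + n) * (p + n)) • br y (br z x)
    + sgn ((r + n) * (q + n)) • br z (br x y)

/-- The fixed-point set `A_M^U` of the action of the group `U(M*)` of invertible elements of
the dual algebra `M*` on `R = A_M` (given by `u · a_α = a_{ᵘα}` on generators). -/
def fixUSet (μ : M →ₗ[K] M ⊗[K] M) (ε : M →ₗ[K] K) (ρ : A →ₗ[K] M →ₗ[K] R) : Set R :=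
  {x : R | ∀ u w : M →ₗ[K] K, conv μ u w = ε → conv μ w u = ε →
    ∀ F : R →ₙₐ[K] R, (∀ (a : A) (α : M), F (ρ a α) = ρ a (innerAct μ w u α)) → F x = x}

/-- The set `A_M^M` of elements of `R = A_M` annihilated by the derivations induced by all
inner coderivations `δ_φ`, `φ ∈ M*`. -/
def fixMSet (μ : M →ₗ[K] M ⊗[K] M) (ℛ : ℤ → Submodule K R) (ρ : A →ₗ[K] M →ₗ[K] R) : Set R :=
  {x : R | ∀ φ : M →ₗ[K] K, ∀ D : R →ₗ[K] R, IsGDer ℛ D →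
    (∀ (a : A) (α : M), D (ρ a α) = ρ a (innerCoder μ φ α)) → D x = 0}

end RepAlg

end PG

/-!
Both sides of `⟨ωx, ωy⟩_v = ω⟨x, y⟩_{v^ω}` are biderivations of `A_M` along the algebra
map `ω` (graded antisymmetric, and satisfying the graded Leibniz rule with `ω` inserted), and
`A_M` is spanned by products of symbols `a_α` with `a` homogeneous, so it suffices to compare
them on two such symbols. There the identity is the naturality
`v̂ ∘ (ω ⊗ ω) = (ω ⊗ ω) ∘ v̂^ω` of `v̂` under coalgebra morphisms, which holds because
`μ² ω = (ω ⊗ ω ⊗ ω) μ²`. The second claim is the special case `v^ω = v`.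
-/

theorem SetLike.IsHomogeneousElem.of_mem_closure {ι R T : Type} [Add ι] [Mul R] [SetLike T R]
    {𝒜 : ι → T} [SetLike.GradedMul 𝒜] {s : Set R}
    (hs : ∀ y ∈ s, SetLike.IsHomogeneousElem 𝒜 y) {x : R} (hx : x ∈ Subsemigroup.closure s) :
    SetLike.IsHomogeneousElem 𝒜 x :=
  Subsemigroup.closure_induction hs (fun _ _ _ _ => SetLike.IsHomogeneousElem.mul) hx

namespace PG

section Naturality

variable {K M N : Type} [CommRing K] [AddCommGroup M] [Module K M] [AddCommGroup N] [Module K N]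
  {μM : M →ₗ[K] M ⊗[K] M} {μN : N →ₗ[K] N ⊗[K] N} {f : M →ₗ[K] N}

theorem comul2_comp (hf : μN ∘ₗ f = map f f ∘ₗ μM) :
    comul2 μN ∘ₗ f = map f (map f f) ∘ₗ comul2 μM := by
  have hlT : μN.lTensor N ∘ₗ map f f = map f (map f f) ∘ₗ μM.lTensor M := by
    ext α β
    simpa using congr(f α ⊗ₜ[K] $hf β)
  rw [comul2, comul2, LinearMap.comp_assoc, hf, ← LinearMap.comp_assoc, hlT,
    LinearMap.comp_assoc]

theorem hat_comp_map (hf : μN ∘ₗ f = map f f ∘ₗ μM) (v : N ⊗[K] N →ₗ[K] K) :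
    hat μN v ∘ₗ map f f = map f f ∘ₗ hat μM (v ∘ₗ map f f) := by
  refine TensorProduct.ext' fun α β => ?_
  have hβ : comul2 μN (f β) = map f (map f f) (comul2 μM β) := congr($(comul2_comp hf) β)
  simp only [hat, LinearMap.comp_apply, map_tmul, LinearMap.lTensor_tmul]
  rw [hβ]
  induction comul2 μM β using TensorProduct.induction_on with
  | zero => simp
  | add x y hx hy => simp only [map_add, tmul_add, hx, hy]
  | tmul β₁ β₂₃ =>
    induction β₂₃ using TensorProduct.induction_on with
    | zero => simp
    | add x y hx hy => simp only [map_add, tmul_add, hx, hy]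
    | tmul β₂ β₃ => simp [TensorProduct.smul_tmul']

end Naturality

section Pairing

variable {K A M N R S : Type} [CommRing K]
  [NonUnitalRing A] [Module K A]
  [AddCommGroup M] [Module K M] [AddCommGroup N] [Module K N]
  [NonUnitalRing R] [Module K R] [SMulCommClass K R R] [IsScalarTower K R R]
  [NonUnitalRing S] [Module K S] [SMulCommClass K S S] [IsScalarTower K S S]

theorem comp_pair2 {ρ : A →ₗ[K] M →ₗ[K] R} {σ : A →ₗ[K] N →ₗ[K] S} {f : M →ₗ[K] N}
    {F : R →ₙₐ[K] S} (hF : ∀ (a : A) (α : M), F (ρ a α) = σ a (f α)) :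
    (F : R →ₗ[K] S) ∘ₗ pair2 ρ = pair2 σ ∘ₗ (map f f).lTensor (A ⊗[K] A) := by
  ext a b α β
  simp [pair2, hF]

end Pairing

section Biderivation

variable {K R S : Type} [CommRing K] [NonUnitalRing R] [Module K R]
  [NonUnitalRing S] [Module K S]
  {ℛ : ℤ → Submodule K R} {n : ℤ}

structure IsBiderAlong (ℛ : ℤ → Submodule K R) (n : ℤ) (F : R → S)
    (B : R →ₗ[K] R →ₗ[K] S) : Prop where
  antisymm : ∀ (p q : ℤ) (x y : R), x ∈ ℛ p → y ∈ ℛ q →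
    B x y = - (sgn ((p + n) * (q + n)) • B y x)
  leibniz : ∀ (p q : ℤ) (x y : R), x ∈ ℛ p → y ∈ ℛ q → ∀ z : R,
    B x (y * z) = B x y * F z + sgn ((p + n) * q) • (F y * B x z)

theorem IsBider.isBiderAlong_compl₁₂ {𝒮 : ℤ → Submodule K S} {br : S →ₗ[K] S →ₗ[K] S}
    (hbr : IsBider 𝒮 n br) {F : R →ₙₐ[K] S} (hF : ∀ (p : ℤ) (x : R), x ∈ ℛ p → F x ∈ 𝒮 p) :
    IsBiderAlong ℛ n F (br.compl₁₂ (F : R →ₗ[K] S) (F : R →ₗ[K] S)) where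
  antisymm p q x y hx hy := hbr.antisymm p q _ _ (hF p x hx) (hF q y hy)
  leibniz p q x y hx hy z := by
    simpa using hbr.leibniz p q _ _ (hF p x hx) (hF q y hy) (F z)

theorem IsBider.isBiderAlong_compr₂ {br : R →ₗ[K] R →ₗ[K] R} (hbr : IsBider ℛ n br)
    (F : R →ₙₐ[K] S) : IsBiderAlong ℛ n F (br.compr₂ (F : R →ₗ[K] S)) where
  antisymm p q x y hx hy := by simp [hbr.antisymm p q x y hx hy]
  leibniz p q x y hx hy z := by simp [hbr.leibniz p q x y hx hy z]

variable [SetLike.GradedMul ℛ] {F : R → S} {B₁ B₂ : R →ₗ[K] R →ₗ[K] S} {s : Set R}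

theorem IsBiderAlong.eqOn_closure_right (h₁ : IsBiderAlong ℛ n F B₁)
    (h₂ : IsBiderAlong ℛ n F B₂) (hs : ∀ y ∈ s, SetLike.IsHomogeneousElem ℛ y) {x : R}
    (hx : SetLike.IsHomogeneousElem ℛ x) (h : Set.EqOn (B₁ x) (B₂ x) s) :
    Set.EqOn (B₁ x) (B₂ x) (Subsemigroup.closure s) := by
  obtain ⟨p, hx⟩ := hx
  intro y hy
  induction hy using Subsemigroup.closure_induction with
  | mem y hy => exact h hy
  | mul y z hy _ ihy ihz =>
    obtain ⟨q, hy⟩ := SetLike.IsHomogeneousElem.of_mem_closure hs hy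
    rw [h₁.leibniz p q x y hx hy, h₂.leibniz p q x y hx hy, ihy, ihz]

theorem IsBiderAlong.ext (h₁ : IsBiderAlong ℛ n F B₁) (h₂ : IsBiderAlong ℛ n F B₂)
    (hs : ∀ y ∈ s, SetLike.IsHomogeneousElem ℛ y)
    (hspan : Submodule.span K (Subsemigroup.closure s : Set R) = ⊤)
    (h : ∀ x ∈ s, Set.EqOn (B₁ x) (B₂ x) s) : B₁ = B₂ := by
  have hclosure : ∀ {x : R}, x ∈ Subsemigroup.closure s → SetLike.IsHomogeneousElem ℛ x :=
    SetLike.IsHomogeneousElem.of_mem_closure hs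
  have hleft : ∀ x ∈ Subsemigroup.closure s, Set.EqOn (B₁ x) (B₂ x) s := by
    intro x hx y hy
    obtain ⟨p, hx'⟩ := hclosure hx
    obtain ⟨q, hy'⟩ := hs y hy
    rw [h₁.antisymm p q x y hx' hy', h₂.antisymm p q x y hx' hy',
      h₁.eqOn_closure_right h₂ hs (hs y hy) (h y hy) hx]
  exact LinearMap.ext_on hspan fun x hx =>
    LinearMap.ext_on hspan (h₁.eqOn_closure_right h₂ hs (hclosure hx) (hleft x hx))

end Biderivation

section RepresentationAlgebra

variable {K A M R : Type} [CommRing K]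
  [NonUnitalRing A] [Module K A]
  [AddCommGroup M] [Module K M]
  [NonUnitalRing R] [Module K R]

def homogeneousSymbols (𝒜 : ℤ → Submodule K A) (ρ : A →ₗ[K] M →ₗ[K] R) : Set R :=
  {x : R | ∃ (p : ℤ) (a : A) (α : M), a ∈ 𝒜 p ∧ ρ a α = x}

theorem span_closure_homogeneousSymbols [SMulCommClass K R R] [IsScalarTower K R R]
    (𝒜 : ℤ → Submodule K A) [DirectSum.Decomposition 𝒜]
    {ρ : A →ₗ[K] M →ₗ[K] R} (hgen : GenRel ρ) :
    Submodule.span K (Subsemigroup.closure (homogeneousSymbols 𝒜 ρ) : Set R) = ⊤ := by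
  rw [← NonUnitalAlgebra.adjoin_eq_span, NonUnitalAlgebra.toSubmodule_eq_top, eq_top_iff,
    ← hgen, NonUnitalAlgebra.adjoin_le_iff]
  rintro _ ⟨a, α, rfl⟩
  induction a using DirectSum.Decomposition.inductionOn 𝒜 with
  | zero => simp
  | homogeneous a =>
    exact NonUnitalAlgebra.subset_adjoin K ⟨_, a, α, a.2, rfl⟩
  | add a b ha hb =>
    rw [map_add, LinearMap.add_apply]
    exact add_mem ha hb

theorem GradRel.isHomogeneousElem {𝒜 : ℤ → Submodule K A} {ℛ : ℤ → Submodule K R}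
    {ρ : A →ₗ[K] M →ₗ[K] R} (hgr : GradRel 𝒜 ℛ ρ) :
    ∀ x ∈ homogeneousSymbols 𝒜 ρ, SetLike.IsHomogeneousElem ℛ x := by
  rintro _ ⟨p, a, α, ha, rfl⟩
  exact ⟨p, hgr p a ha α⟩

theorem bracket_map_map_eq_map_bracket [SMulCommClass K R R] [IsScalarTower K R R]
    {N S : Type} [AddCommGroup N] [Module K N]
    [NonUnitalRing S] [Module K S] [SMulCommClass K S S] [IsScalarTower K S S]
    (𝒜 : ℤ → Submodule K A) [DirectSum.Decomposition 𝒜]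
    {ℛ : ℤ → Submodule K R} [SetLike.GradedMul ℛ] {𝒮 : ℤ → Submodule K S}
    {μM : M →ₗ[K] M ⊗[K] M} {μN : N →ₗ[K] N ⊗[K] N} {f : M →ₗ[K] N}
    (hf : μN ∘ₗ f = map f f ∘ₗ μM)
    {ρ : A →ₗ[K] M →ₗ[K] R} (hgen : GenRel ρ) (hgr : GradRel 𝒜 ℛ ρ) {σ : A →ₗ[K] N →ₗ[K] S}
    {F : R →ₙₐ[K] S} (hFgr : ∀ (p : ℤ) (x : R), x ∈ ℛ p → F x ∈ 𝒮 p)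
    (hF : ∀ (a : A) (α : M), F (ρ a α) = σ a (f α))
    {n : ℤ} {db : A →ₗ[K] A →ₗ[K] A ⊗[K] A} {v : N ⊗[K] N →ₗ[K] K}
    {brv : S →ₗ[K] S →ₗ[K] S} (hbrv : IsBider 𝒮 n brv) (hforv : BrFormula μN v db σ brv)
    {brw : R →ₗ[K] R →ₗ[K] R} (hbrw : IsBider ℛ n brw)
    (hforw : BrFormula μM (v ∘ₗ map f f) db ρ brw) (x y : R) :
    brv (F x) (F y) = F (brw x y) := by
  have hsymbols : ∀ x ∈ homogeneousSymbols 𝒜 ρ, Set.EqOn (brv.compl₁₂ (F : R →ₗ[K] S) F x)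
      (brw.compr₂ (F : R →ₗ[K] S) x) (homogeneousSymbols 𝒜 ρ) := by
    rintro _ ⟨-, a, α, -, rfl⟩ _ ⟨-, b, β, -, rfl⟩
    have hhat := congr($(hat_comp_map hf v) (α ⊗ₜ[K] β))
    have hpair := congr($(comp_pair2 hF) (db a b ⊗ₜ[K] hat μM (v ∘ₗ map f f) (α ⊗ₜ[K] β)))
    simp only [LinearMap.comp_apply, map_tmul, LinearMap.lTensor_tmul, LinearMap.coe_coe]
      at hhat hpair
    simp only [LinearMap.compl₁₂_apply, LinearMap.compr₂_apply, LinearMap.coe_coe, hF]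
    rw [hforv, hforw, hhat, hpair]
  exact LinearMap.congr_fun₂ ((hbrv.isBiderAlong_compl₁₂ hFgr).ext
    (hbrw.isBiderAlong_compr₂ F) hgr.isHomogeneousElem
    (span_closure_homogeneousSymbols 𝒜 hgen) hsymbols) x y

end RepresentationAlgebra

end PG

theorem statement_7_general {K A M R : Type} [CommRing K]
    [NonUnitalRing A] [Module K A]
    (𝒜 : ℤ → Submodule K A) [DirectSum.Decomposition 𝒜]
    [AddCommGroup M] [Module K M] (μ : M →ₗ[K] M ⊗[K] M)
    [NonUnitalRing R] [Module K R] [SMulCommClass K R R] [IsScalarTower K R R]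
    (ℛ : ℤ → Submodule K R) [SetLike.GradedMul ℛ]
    (ρ : A →ₗ[K] M →ₗ[K] R) (hrep : PG.IsRepAlgebra μ 𝒜 ℛ ρ)
    (n : ℤ) (db : A →ₗ[K] A →ₗ[K] A ⊗[K] A)
    (v : M ⊗[K] M →ₗ[K] K)
    (ω : M ≃ₗ[K] M)
    (hω : μ ∘ₗ ω.toLinearMap = TensorProduct.map ω.toLinearMap ω.toLinearMap ∘ₗ μ)
    (F : R →ₙₐ[K] R) (hFgr : ∀ (p : ℤ) (x : R), x ∈ ℛ p → F x ∈ ℛ p)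
    (hF : ∀ (a : A) (α : M), F (ρ a α) = ρ a (ω α))
    (brv : R →ₗ[K] R →ₗ[K] R) (hbrv : PG.IsBider ℛ n brv)
    (hforv : PG.BrFormula μ v db ρ brv)
    (brw : R →ₗ[K] R →ₗ[K] R) (hbrw : PG.IsBider ℛ n brw)
    (hforw : PG.BrFormula μ (v ∘ₗ TensorProduct.map ω.toLinearMap ω.toLinearMap) db ρ brw) :
    (∀ x y : R, brv (F x) (F y) = F (brw x y)) ∧
    ((v ∘ₗ TensorProduct.map ω.toLinearMap ω.toLinearMap = v) →
      ∀ x y : R, brv (F x) (F y) = F (brv x y)) := by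
  have equivariant {brw : R →ₗ[K] R →ₗ[K] R} := PG.bracket_map_map_eq_map_bracket (brw := brw) 𝒜
    hω hrep.gen_rel hrep.grad_rel hFgr hF hbrv hforv
  exact ⟨equivariant hbrw hforw, fun hvω => equivariant hbrv (by rwa [hvω])⟩

/-- for a coalgebra automorphism `ω` of `M` acting on `A_M` by
`ω · a_α = a_{ω(α)}`, one has `⟨ωx, ωy⟩_v = ω⟨x, y⟩_{v^ω}` with `v^ω = v ∘ (ω ⊗ ω)`; in
particular the bracket `⟨−,−⟩_v` is preserved by the isotropy group of `v`. -/
theorem statement_7 {K A M R : Type} [CommRing K]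
    [NonUnitalRing A] [Module K A] [SMulCommClass K A A] [IsScalarTower K A A]
    (𝒜 : ℤ → Submodule K A) [SetLike.GradedMul 𝒜] [DirectSum.Decomposition 𝒜]
    [AddCommGroup M] [Module K M] (μ : M →ₗ[K] M ⊗[K] M) (hμ : PG.Coassoc μ)
    [NonUnitalRing R] [Module K R] [SMulCommClass K R R] [IsScalarTower K R R]
    (ℛ : ℤ → Submodule K R) [SetLike.GradedMul ℛ] [DirectSum.Decomposition ℛ]
    (ρ : A →ₗ[K] M →ₗ[K] R) (hrep : PG.IsRepAlgebra μ 𝒜 ℛ ρ)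
    (n : ℤ) (db : A →ₗ[K] A →ₗ[K] A ⊗[K] A) (hdb : PG.IsDoubleBracket 𝒜 n db)
    (v : M ⊗[K] M →ₗ[K] K) (hv : PG.IsCyclic μ v)
    (ω : M ≃ₗ[K] M)
    (hω : μ ∘ₗ ω.toLinearMap = TensorProduct.map ω.toLinearMap ω.toLinearMap ∘ₗ μ)
    (F : R →ₙₐ[K] R) (hFgr : ∀ (p : ℤ) (x : R), x ∈ ℛ p → F x ∈ ℛ p)
    (hF : ∀ (a : A) (α : M), F (ρ a α) = ρ a (ω α))
    (brv : R →ₗ[K] R →ₗ[K] R) (hbrv : PG.IsBider ℛ n brv)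
    (hforv : PG.BrFormula μ v db ρ brv)
    (brw : R →ₗ[K] R →ₗ[K] R) (hbrw : PG.IsBider ℛ n brw)
    (hforw : PG.BrFormula μ (v ∘ₗ TensorProduct.map ω.toLinearMap ω.toLinearMap) db ρ brw) :
    (∀ x y : R, brv (F x) (F y) = F (brw x y)) ∧
    ((v ∘ₗ TensorProduct.map ω.toLinearMap ω.toLinearMap = v) →
      ∀ x y : R, brv (F x) (F y) = F (brv x y)) :=
  statement_7_general 𝒜 μ ℛ ρ hrep n db v ω hω F hFgr hF brv hbrv hforv brw hbrw hforw
end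

section
/- For any graded algebra A and any coalgebra M over a commutative ring K, there is a unique action of the Lie algebra coder(M) of coderivations of M on the algebra Ã_M by degree-zero derivations (i.e. a Lie algebra homomorphism coder(M) → der(Ã_M)) such that δ(a_α) = a_{δ(α)} for every δ ∈ coder(M), a ∈ A, α ∈ M. -/
open TensorProduct

/-!
A degree-zero derivation `D` of `Ã_M` with `D(a_α) = a_{δα}` amounts to a graded algebra map
`Ã_M → Ã_M[ε]`, `x ↦ x + D(x) ε`, into the square-zero extension (`ε² = 0`). When `δ` is a
coderivation, the family `a_α + a_{δα} ε` satisfies the multiplicativity relations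
`(ab)_α = a_{α¹} b_{α²}`, so the universal property of `Ã_M` produces this map, and its first
component is the identity because it is so on generators. A derivation is determined by its
values on the generators `a_α`; this gives uniqueness, and comparing the derivations induced by
`δ + d`, `c δ` and `[δ, d]` with the sum, multiple and commutator of those induced by `δ` and `d`
shows that `δ ↦ D` is a Lie algebra homomorphism.
-/

namespace PG

/-- `S[ε]` with `ε² = 0`, as pairs `(x, y)` standing for `x + y ε`; Mathlib's `TrivSqZeroExt S S`
would need `S` to be unital. -/
def DualExt (S : Type) : Type := S × S

namespace DualExt

@[ext]
lemma ext {S : Type} {x y : DualExt S} (h₁ : x.1 = y.1) (h₂ : x.2 = y.2) : x = y :=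
  Prod.ext h₁ h₂

variable {K S : Type} [CommRing K] [NonUnitalRing S] [Module K S]

instance : AddCommGroup (DualExt S) := inferInstanceAs (AddCommGroup (S × S))

instance : Module K (DualExt S) := inferInstanceAs (Module K (S × S))

instance : Mul (DualExt S) := ⟨fun x y => (x.1 * y.1, x.1 * y.2 + x.2 * y.1)⟩

@[simp] lemma fst_zero : (0 : DualExt S).1 = 0 := rfl
@[simp] lemma snd_zero : (0 : DualExt S).2 = 0 := rfl
@[simp] lemma fst_add (x y : DualExt S) : (x + y).1 = x.1 + y.1 := rfl
@[simp] lemma snd_add (x y : DualExt S) : (x + y).2 = x.2 + y.2 := rfl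
@[simp] lemma fst_smul (c : K) (x : DualExt S) : (c • x).1 = c • x.1 := rfl
@[simp] lemma snd_smul (c : K) (x : DualExt S) : (c • x).2 = c • x.2 := rfl
@[simp] lemma fst_mul (x y : DualExt S) : (x * y).1 = x.1 * y.1 := rfl
@[simp] lemma snd_mul (x y : DualExt S) : (x * y).2 = x.1 * y.2 + x.2 * y.1 := rfl

instance : NonUnitalRing (DualExt S) where
  left_distrib _ _ _ := ext (by simp [mul_add]) <| by
    simp only [snd_mul, snd_add, fst_add, mul_add]; abel
  right_distrib _ _ _ := ext (by simp [add_mul]) <| by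
    simp only [snd_mul, snd_add, fst_add, add_mul]; abel
  zero_mul _ := ext (by simp) (by simp)
  mul_zero _ := ext (by simp) (by simp)
  mul_assoc _ _ _ := ext (by simp [mul_assoc]) <| by
    simp only [snd_mul, fst_mul, mul_add, add_mul, mul_assoc]; abel

variable [SMulCommClass K S S] [IsScalarTower K S S]

instance : SMulCommClass K (DualExt S) (DualExt S) :=
  ⟨fun _ _ _ => ext (by simp [mul_smul_comm]) (by simp [mul_smul_comm, smul_add])⟩

instance : IsScalarTower K (DualExt S) (DualExt S) :=
  ⟨fun _ _ _ => ext (by simp [smul_mul_assoc]) (by simp [smul_mul_assoc, smul_add])⟩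

variable (K) in
@[simps]
def sndHom : DualExt S →ₗ[K] S where
  toFun x := x.2
  map_add' _ _ := rfl
  map_smul' _ _ := rfl

def grading (𝒮 : ℤ → Submodule K S) (p : ℤ) : Submodule K (DualExt S) where
  carrier := {x | x.1 ∈ 𝒮 p ∧ x.2 ∈ 𝒮 p}
  add_mem' hx hy := ⟨add_mem hx.1 hy.1, add_mem hx.2 hy.2⟩
  zero_mem' := ⟨zero_mem _, zero_mem _⟩
  smul_mem' c _ hx := ⟨Submodule.smul_mem _ c hx.1, Submodule.smul_mem _ c hx.2⟩

end DualExt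

section Derivation

variable {K A M R : Type} [CommRing K] [NonUnitalRing R] [Module K R]
variable {ℛ : ℤ → Submodule K R} {D D' : R →ₗ[K] R}

lemma IsGDer.add (hD : IsGDer ℛ D) (hD' : IsGDer ℛ D') : IsGDer ℛ (D + D') :=
  ⟨fun p x hx => add_mem (hD.1 p x hx) (hD'.1 p x hx),
    fun x y => by simp only [LinearMap.add_apply, hD.2, hD'.2, add_mul, mul_add]; abel⟩

lemma IsGDer.commutator (hD : IsGDer ℛ D) (hD' : IsGDer ℛ D') :
    IsGDer ℛ (D ∘ₗ D' - D' ∘ₗ D) :=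
  ⟨fun p x hx => sub_mem (hD.1 p _ (hD'.1 p x hx)) (hD'.1 p _ (hD.1 p x hx)),
    fun x y => by
      simp only [LinearMap.sub_apply, LinearMap.comp_apply, hD.2, hD'.2, map_add, sub_mul,
        mul_sub]
      abel⟩

variable [SMulCommClass K R R] [IsScalarTower K R R]

lemma IsGDer.smul (c : K) (hD : IsGDer ℛ D) : IsGDer ℛ (c • D) :=
  ⟨fun p x hx => Submodule.smul_mem _ c (hD.1 p x hx),
    fun x y => by simp only [LinearMap.smul_apply, hD.2, smul_add, smul_mul_assoc, mul_smul_comm]⟩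

variable [NonUnitalRing A] [Module K A] [AddCommGroup M] [Module K M]

lemma GenRel.induction {ρ : A →ₗ[K] M →ₗ[K] R} (hρ : GenRel ρ) {P : R → Prop}
    (gen : ∀ a α, P (ρ a α)) (zero : P 0) (add : ∀ x y, P x → P y → P (x + y))
    (mul : ∀ x y, P x → P y → P (x * y)) (smul : ∀ (c : K) x, P x → P (c • x)) (x : R) :
    P x := by
  have hx : x ∈ NonUnitalAlgebra.adjoin K {x : R | ∃ a α, ρ a α = x} := hρ ▸ trivial
  induction hx using NonUnitalAlgebra.adjoin_induction with
  | mem x hx => obtain ⟨a, α, rfl⟩ := hx; exact gen a α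
  | zero => exact zero
  | add x y _ _ hx hy => exact add x y hx hy
  | mul x y _ _ hx hy => exact mul x y hx hy
  | smul c x _ hx => exact smul c x hx

lemma GenRel.derivation_ext {ρ : A →ₗ[K] M →ₗ[K] R} (hρ : GenRel ρ)
    (hD : ∀ x y, D (x * y) = D x * y + x * D y) (hD' : ∀ x y, D' (x * y) = D' x * y + x * D' y)
    (h : ∀ a α, D (ρ a α) = D' (ρ a α)) : D = D' :=
  LinearMap.ext <| hρ.induction h (by simp) (fun _ _ hx hy => by simp [hx, hy])
    (fun _ _ hx hy => by rw [hD, hD', hx, hy]) (fun _ _ hx => by simp [hx])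

end Derivation

section Coderivation

variable {K A M S : Type} [CommRing K] [NonUnitalRing A] [Module K A] [AddCommGroup M] [Module K M]
variable [NonUnitalRing S] [Module K S]

def dualLift (ρ : A →ₗ[K] M →ₗ[K] S) (δ : M →ₗ[K] M) : A →ₗ[K] M →ₗ[K] DualExt S :=
  LinearMap.mk₂ K (fun a α => ((ρ a α, ρ a (δ α)) : DualExt S))
    (fun a b α => DualExt.ext (ρ.map_add₂ a b α) (ρ.map_add₂ a b (δ α)))
    (fun c a α => DualExt.ext (ρ.map_smul₂ c a α) (ρ.map_smul₂ c a (δ α)))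
    (fun a α β => DualExt.ext (map_add (ρ a) α β) (by simp only [map_add]; rfl))
    (fun c a α => DualExt.ext (map_smul (ρ a) c α) (by simp only [map_smul]; rfl))

@[simp] lemma dualLift_fst (ρ : A →ₗ[K] M →ₗ[K] S) (δ : M →ₗ[K] M) (a : A) (α : M) :
    (dualLift ρ δ a α).1 = ρ a α := rfl

@[simp] lemma dualLift_snd (ρ : A →ₗ[K] M →ₗ[K] S) (δ : M →ₗ[K] M) (a : A) (α : M) :
    (dualLift ρ δ a α).2 = ρ a (δ α) := rfl

lemma gradRel_dualLift {𝒜 : ℤ → Submodule K A} {𝒮 : ℤ → Submodule K S}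
    {ρ : A →ₗ[K] M →ₗ[K] S} (hρ : GradRel 𝒜 𝒮 ρ) (δ : M →ₗ[K] M) :
    GradRel 𝒜 (DualExt.grading 𝒮) (dualLift ρ δ) :=
  fun p _ ha α => ⟨hρ p _ ha α, hρ p _ ha (δ α)⟩

variable [SMulCommClass K S S] [IsScalarTower K S S]

lemma fst_mul'_map_dualLift (ρ : A →ₗ[K] M →ₗ[K] S) (δ : M →ₗ[K] M) (a b : A)
    (t : M ⊗[K] M) :
    (LinearMap.mul' K (DualExt S) (TensorProduct.map (dualLift ρ δ a) (dualLift ρ δ b) t)).1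
      = LinearMap.mul' K S (TensorProduct.map (ρ a) (ρ b) t) := by
  induction t using TensorProduct.induction_on with
  | zero => simp
  | tmul β γ => simp
  | add t t' ht ht' => simp [ht, ht']

lemma snd_mul'_map_dualLift (ρ : A →ₗ[K] M →ₗ[K] S) (δ : M →ₗ[K] M) (a b : A)
    (t : M ⊗[K] M) :
    (LinearMap.mul' K (DualExt S) (TensorProduct.map (dualLift ρ δ a) (dualLift ρ δ b) t)).2
      = LinearMap.mul' K S (TensorProduct.map (ρ a) (ρ b) ((δ.rTensor M + δ.lTensor M) t)) := by
  induction t using TensorProduct.induction_on with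
  | zero => simp
  | tmul β γ => simp [add_comm]
  | add t t' ht ht' => simp only [map_add, DualExt.snd_add, ht, ht']

lemma mulRel_dualLift {μ : M →ₗ[K] M ⊗[K] M} {ρ : A →ₗ[K] M →ₗ[K] S} {δ : M →ₗ[K] M}
    (hρ : MulRel μ ρ) (hδ : IsCoderivation μ δ) : MulRel μ (dualLift ρ δ) := by
  intro a b α
  ext
  · rw [fst_mul'_map_dualLift, dualLift_fst, hρ]
  · rw [snd_mul'_map_dualLift, dualLift_snd, hρ, ← LinearMap.comp_apply μ δ, hδ,
      LinearMap.comp_apply]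

lemma exists_isGDer_of_isCoderivation {μ : M →ₗ[K] M ⊗[K] M} {𝒜 : ℤ → Submodule K A}
    {𝒮 : ℤ → Submodule K S} {ρ : A →ₗ[K] M →ₗ[K] S} (hrep : IsTildeRepAlgebra μ 𝒜 𝒮 ρ)
    {δ : M →ₗ[K] M} (hδ : IsCoderivation μ δ) :
    ∃ D : S →ₗ[K] S, IsGDer 𝒮 D ∧ ∀ a α, D (ρ a α) = ρ a (δ α) := by
  obtain ⟨F, ⟨hFgr, hFρ⟩, -⟩ := hrep.univ_rel (DualExt S) (DualExt.grading 𝒮) (dualLift ρ δ)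
    (gradRel_dualLift hrep.grad_rel δ) (mulRel_dualLift hrep.mul_rel hδ)
  have hFfst : ∀ x, (F x).1 = x := hrep.gen_rel.induction (fun a α => by rw [hFρ]; rfl)
    (by simp) (fun _ _ hx hy => by simp [hx, hy]) (fun _ _ hx hy => by simp [hx, hy])
    (fun _ _ hx => by simp [hx])
  refine ⟨DualExt.sndHom K ∘ₗ (F : S →ₗ[K] DualExt S),
    ⟨fun p x hx => (hFgr p x hx).2, fun x y => ?_⟩, fun a α => by simp [hFρ]⟩
  simp [hFfst, add_comm]

end Coderivation

end PG

theorem statement_9_general {K A M S : Type} [CommRing K]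
    [NonUnitalRing A] [Module K A]
    (𝒜 : ℤ → Submodule K A)
    [AddCommGroup M] [Module K M] (μ : M →ₗ[K] M ⊗[K] M)
    [NonUnitalRing S] [Module K S] [SMulCommClass K S S] [IsScalarTower K S S]
    (𝒮 : ℤ → Submodule K S)
    (ρ : A →ₗ[K] M →ₗ[K] S) (hrep : PG.IsTildeRepAlgebra μ 𝒜 𝒮 ρ) :
    ∃! Ψ : {δ : M →ₗ[K] M // PG.IsCoderivation μ δ} → (S →ₗ[K] S),
      (∀ δ, PG.IsGDer 𝒮 (Ψ δ)) ∧
      (∀ δ (a : A) (α : M), Ψ δ (ρ a α) = ρ a (δ.1 α)) ∧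
      (∀ δ d e : {δ : M →ₗ[K] M // PG.IsCoderivation μ δ},
        e.1 = δ.1 + d.1 → Ψ e = Ψ δ + Ψ d) ∧
      (∀ (c : K) (δ e : {δ : M →ₗ[K] M // PG.IsCoderivation μ δ}),
        e.1 = c • δ.1 → Ψ e = c • Ψ δ) ∧
      (∀ δ d e : {δ : M →ₗ[K] M // PG.IsCoderivation μ δ},
        e.1 = δ.1 ∘ₗ d.1 - d.1 ∘ₗ δ.1 → Ψ e = Ψ δ ∘ₗ Ψ d - Ψ d ∘ₗ Ψ δ) := by
  choose Ψ hΨ hΨρ using fun δ : {δ // PG.IsCoderivation μ δ} =>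
    PG.exists_isGDer_of_isCoderivation hrep δ.2
  have unique : ∀ δ D, PG.IsGDer 𝒮 D → (∀ a α, D (ρ a α) = ρ a (δ.1 α)) → Ψ δ = D :=
    fun δ D hD hDρ => hrep.gen_rel.derivation_ext (hΨ δ).2 hD.2 fun a α => by rw [hΨρ, hDρ]
  refine ⟨Ψ, ⟨hΨ, hΨρ, fun δ d e he => ?_, fun c δ e he => ?_, fun δ d e he => ?_⟩,
    fun Ψ' hΨ' => funext fun δ => (unique δ _ (hΨ'.1 δ) (hΨ'.2.1 δ)).symm⟩
  · exact unique e _ ((hΨ δ).add (hΨ d)) fun a α => by simp [hΨρ, he]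
  · exact unique e _ ((hΨ δ).smul c) fun a α => by simp [hΨρ, he]
  · exact unique e _ ((hΨ δ).commutator (hΨ d)) fun a α => by simp [hΨρ, he]

/-- for a graded algebra `A` and a coalgebra `M` there is a unique action of the
Lie algebra `coder(M)` of coderivations of `M` on `Ã_M` by degree-zero derivations (i.e. a
Lie algebra homomorphism `coder(M) → der(Ã_M)`) such that `δ(a_α) = a_{δ(α)}`. -/
theorem statement_9 {K A M S : Type} [CommRing K]
    [NonUnitalRing A] [Module K A] [SMulCommClass K A A] [IsScalarTower K A A]
    (𝒜 : ℤ → Submodule K A) [SetLike.GradedMul 𝒜] [DirectSum.Decomposition 𝒜]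
    [AddCommGroup M] [Module K M] (μ : M →ₗ[K] M ⊗[K] M) (hμ : PG.Coassoc μ)
    [NonUnitalRing S] [Module K S] [SMulCommClass K S S] [IsScalarTower K S S]
    (𝒮 : ℤ → Submodule K S) [SetLike.GradedMul 𝒮] [DirectSum.Decomposition 𝒮]
    (ρ : A →ₗ[K] M →ₗ[K] S) (hrep : PG.IsTildeRepAlgebra μ 𝒜 𝒮 ρ) :
    ∃! Ψ : {δ : M →ₗ[K] M // PG.IsCoderivation μ δ} → (S →ₗ[K] S),
      (∀ δ, PG.IsGDer 𝒮 (Ψ δ)) ∧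
      (∀ δ (a : A) (α : M), Ψ δ (ρ a α) = ρ a (δ.1 α)) ∧
      (∀ δ d e : {δ : M →ₗ[K] M // PG.IsCoderivation μ δ},
        e.1 = δ.1 + d.1 → Ψ e = Ψ δ + Ψ d) ∧
      (∀ (c : K) (δ e : {δ : M →ₗ[K] M // PG.IsCoderivation μ δ}),
        e.1 = c • δ.1 → Ψ e = c • Ψ δ) ∧
      (∀ δ d e : {δ : M →ₗ[K] M // PG.IsCoderivation μ δ},
        e.1 = δ.1 ∘ₗ d.1 - d.1 ∘ₗ δ.1 → Ψ e = Ψ δ ∘ₗ Ψ d - Ψ d ∘ₗ Ψ δ) :=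
  statement_9_general 𝒜 μ 𝒮 ρ hrep
end

section
/- Let M be a coalgebra over a commutative ring K and v a cyclic bilinear form on M. If θ ∈ M is adjoint to v, meaning that the map M → K, α ↦ v(θ⊗α), is a counit of M, then θ is symmetric: p₂₁μ(θ) = μ(θ). -/
open TensorProduct

/-- if `θ` is adjoint to a cyclic bilinear form `v` on a coalgebra `(M, μ)`
(i.e. `α ↦ v(θ ⊗ α)` is a counit of `M`), then `θ` is symmetric: `p₂₁ μ(θ) = μ(θ)`. -/
theorem statement_12 {K M : Type} [CommRing K] [AddCommGroup M] [Module K M]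
    (μ : M →ₗ[K] M ⊗[K] M) (hμ : PG.Coassoc μ)
    (v : M ⊗[K] M →ₗ[K] K) (hv : PG.IsCyclic μ v)
    (θ : M) (hθ : PG.IsCounit μ (v ∘ₗ TensorProduct.mk K M M θ)) :
    PG.flipT K M (μ θ) = μ θ := by
  classical
  set ε : M →ₗ[K] K := v ∘ₗ TensorProduct.mk K M M θ with hε
  set rest : M ⊗[K] (M ⊗[K] (M ⊗[K] M)) →ₗ[K] M ⊗[K] M :=
    (LinearMap.lTensor M (TensorProduct.lid K M).toLinearMap)
    ∘ₗ (LinearMap.lTensor M (LinearMap.rTensor M v))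
    ∘ₗ (LinearMap.lTensor M (TensorProduct.assoc K M M M).symm.toLinearMap)
    ∘ₗ (TensorProduct.assoc K M M (M ⊗[K] M)).toLinearMap
    ∘ₗ (LinearMap.rTensor (M ⊗[K] M) (TensorProduct.comm K M M).toLinearMap)
    ∘ₗ (TensorProduct.assoc K M M (M ⊗[K] M)).symm.toLinearMap with hrestdef
  have hrest : ∀ x : M, PG.hat μ v (θ ⊗ₜ[K] x)
      = rest (θ ⊗ₜ[K] ((LinearMap.lTensor M μ) (μ x))) := by
    intro x
    simp [PG.hat, PG.comul2, hrestdef, LinearMap.comp_apply]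
  have hpure : ∀ (a c d : M),
      rest (θ ⊗ₜ[K] (a ⊗ₜ[K] (c ⊗ₜ[K] d))) = a ⊗ₜ[K] (ε c • d) := by
    intro a c d
    simp [hrestdef, hε, LinearMap.comp_apply, TensorProduct.smul_tmul']
  have hstep : ∀ (a : M) (s : M ⊗[K] M),
      rest (θ ⊗ₜ[K] (a ⊗ₜ[K] s))
        = a ⊗ₜ[K] ((TensorProduct.lid K M) ((ε.rTensor M) s)) := by
    intro a s
    induction s using TensorProduct.induction_on with
    | zero => simp
    | tmul c d => simpa using hpure a c d
    | add u w hu hw =>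
        rw [TensorProduct.tmul_add a u w, TensorProduct.tmul_add, map_add, hu, hw,
          map_add, map_add, TensorProduct.tmul_add]
  have key : ∀ x : M, PG.hat μ v (θ ⊗ₜ[K] x) = μ x := by
    intro x
    rw [hrest]
    have main : ∀ T : M ⊗[K] M,
        rest (θ ⊗ₜ[K] (LinearMap.lTensor M μ T)) = T := by
      intro T
      induction T using TensorProduct.induction_on with
      | zero => simp
      | tmul a b =>
          rw [LinearMap.lTensor_tmul, hstep a (μ b), (hθ b).1]
      | add u w hu hw =>
          rw [map_add, TensorProduct.tmul_add, map_add, hu, hw]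
    exact main (μ x)
  have h := congrFun (congrArg DFunLike.coe hv) (θ ⊗ₜ[K] θ)
  simp only [LinearMap.comp_apply, PG.flipT, LinearEquiv.coe_coe,
    TensorProduct.comm_tmul] at h
  rw [key] at h
  simpa [PG.flipT] using h.symm
end

section
/- Let ⟪−,−⟫ be an n-graded double bracket on a graded algebra A, v a cyclic bilinear form on a coalgebra M, and θ ∈ M adjoint to v (i.e. α ↦ v(θ⊗α) is a counit of M). Then the induced trace tr_θ: Ǎ = A/[A,A] → A_M carries the bracket ⟨−,−⟩ on Ǎ to the bracket ⟨−,−⟩_v on A_M: ⟨tr_θ(ǎ), tr_θ(b̌)⟩_v = tr_θ(⟨ǎ, b̌⟩) for all ǎ, b̌ ∈ Ǎ. Consequently the subalgebra A(θ) of A_M generated by {a_θ : a ∈ A} is closed under ⟨−,−⟩_v. -/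
open TensorProduct

/-- if `θ ∈ M` is adjoint to the cyclic bilinear form `v` (i.e. `α ↦ v(θ ⊗ α)`
is a counit of `M`), then the trace `tr_θ` carries the bracket `⟨ǎ, b̌⟩ = ⟪a,b⟫′⟪a,b⟫″` of
`Ǎ = A/[A,A]` to the bracket `⟨−,−⟩_v` of `A_M`:
`⟨a_θ, b_θ⟩_v = (⟪a,b⟫′⟪a,b⟫″)_θ`; consequently the subalgebra `A(θ)` generated by
`{a_θ}` is closed under `⟨−,−⟩_v`. -/
theorem statement_13 {K A M R : Type} [CommRing K]
    [NonUnitalRing A] [Module K A] [SMulCommClass K A A] [IsScalarTower K A A]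
    (𝒜 : ℤ → Submodule K A) [SetLike.GradedMul 𝒜] [DirectSum.Decomposition 𝒜]
    [AddCommGroup M] [Module K M] (μ : M →ₗ[K] M ⊗[K] M) (hμ : PG.Coassoc μ)
    [NonUnitalRing R] [Module K R] [SMulCommClass K R R] [IsScalarTower K R R]
    (ℛ : ℤ → Submodule K R) [SetLike.GradedMul ℛ] [DirectSum.Decomposition ℛ]
    (ρ : A →ₗ[K] M →ₗ[K] R) (hrep : PG.IsRepAlgebra μ 𝒜 ℛ ρ)
    (n : ℤ) (db : A →ₗ[K] A →ₗ[K] A ⊗[K] A) (hdb : PG.IsDoubleBracket 𝒜 n db)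
    (v : M ⊗[K] M →ₗ[K] K) (hv : PG.IsCyclic μ v)
    (br : R →ₗ[K] R →ₗ[K] R) (hbr : PG.IsBider ℛ n br) (hfor : PG.BrFormula μ v db ρ br)
    (θ : M) (hθ : PG.IsCounit μ (v ∘ₗ TensorProduct.mk K M M θ)) :
    (∀ a b : A, br (ρ a θ) (ρ b θ) = ρ (LinearMap.mul' K A (db a b)) θ) ∧
    (∀ x ∈ NonUnitalAlgebra.adjoin K {y : R | ∃ a : A, ρ a θ = y},
      ∀ z ∈ NonUnitalAlgebra.adjoin K {y : R | ∃ a : A, ρ a θ = y},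
      br x z ∈ NonUnitalAlgebra.adjoin K {y : R | ∃ a : A, ρ a θ = y}) := by
  classical
  set ε : M →ₗ[K] K := v ∘ₗ TensorProduct.mk K M M θ with hεdef
  set C : M ⊗[K] (M ⊗[K] (M ⊗[K] M)) →ₗ[K] M ⊗[K] M :=
    (LinearMap.lTensor M (TensorProduct.lid K M).toLinearMap)
    ∘ₗ (LinearMap.lTensor M (LinearMap.rTensor M v))
    ∘ₗ (LinearMap.lTensor M (TensorProduct.assoc K M M M).symm.toLinearMap)
    ∘ₗ (TensorProduct.assoc K M M (M ⊗[K] M)).toLinearMap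
    ∘ₗ (LinearMap.rTensor (M ⊗[K] M) (TensorProduct.comm K M M).toLinearMap)
    ∘ₗ (TensorProduct.assoc K M M (M ⊗[K] M)).symm.toLinearMap with hC
  have hatC : ∀ t : M ⊗[K] M, PG.hat μ v t = C (LinearMap.lTensor M (PG.comul2 μ) t) :=
    fun t => rfl
  have hchain : ∀ c : M ⊗[K] (M ⊗[K] M),
      C (θ ⊗ₜ[K] c)
      = LinearMap.lTensor M ((TensorProduct.lid K M).toLinearMap ∘ₗ LinearMap.rTensor M ε) c := by
    intro c
    induction c using TensorProduct.induction_on with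
    | zero => simp
    | tmul x d =>
      induction d using TensorProduct.induction_on with
      | zero => simp
      | tmul y z =>
        simp [hC, hεdef, TensorProduct.assoc_symm_tmul, TensorProduct.assoc_tmul,
          TensorProduct.smul_tmul]
      | add d1 d2 h1 h2 =>
        rw [TensorProduct.tmul_add x, TensorProduct.tmul_add θ, map_add, map_add, h1, h2]
    | add c1 c2 h1 h2 =>
      rw [TensorProduct.tmul_add θ, map_add, map_add, h1, h2]
  have hhat : PG.hat μ v (θ ⊗ₜ[K] θ) = μ θ := by
    have h1 : PG.hat μ v (θ ⊗ₜ[K] θ)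
        = LinearMap.lTensor M ((TensorProduct.lid K M).toLinearMap ∘ₗ LinearMap.rTensor M ε)
            (PG.comul2 μ θ) := by
      rw [hatC, LinearMap.lTensor_tmul, hchain]
    rw [h1, PG.comul2, LinearMap.comp_apply]
    rw [← LinearMap.comp_apply _ (LinearMap.lTensor M μ), ← LinearMap.lTensor_comp]
    have hid : ((TensorProduct.lid K M).toLinearMap ∘ₗ LinearMap.rTensor M ε) ∘ₗ μ
        = LinearMap.id := by
      ext w
      simpa using (hθ w).1
    rw [hid, LinearMap.lTensor_id, LinearMap.id_apply]
  have hp2 : ∀ (x y : A) (s : M ⊗[K] M),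
      PG.pair2 ρ ((x ⊗ₜ[K] y) ⊗ₜ[K] s) = LinearMap.mul' K R (TensorProduct.map (ρ x) (ρ y) s) := by
    intro x y s
    induction s using TensorProduct.induction_on with
    | zero => simp [PG.pair2]
    | tmul γ δ => simp [PG.pair2, TensorProduct.tensorTensorTensorComm_tmul]
    | add s1 s2 h1 h2 => rw [TensorProduct.tmul_add, map_add, h1, h2, map_add, map_add]
  have hpair : ∀ t : A ⊗[K] A, PG.pair2 ρ (t ⊗ₜ[K] (μ θ)) = ρ (LinearMap.mul' K A t) θ := by
    intro t
    induction t using TensorProduct.induction_on with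
    | zero => simp
    | tmul x y => rw [LinearMap.mul'_apply, hrep.mul_rel x y θ, hp2]
    | add t1 t2 h1 h2 =>
      simp only [TensorProduct.add_tmul, map_add, LinearMap.add_apply, h1, h2]
  have part1 : ∀ a b : A, br (ρ a θ) (ρ b θ) = ρ (LinearMap.mul' K A (db a b)) θ := by
    intro a b
    rw [hfor a b θ θ, hhat, hpair]
  refine ⟨part1, ?_⟩
  set S : Set R := {y : R | ∃ a : A, ρ a θ = y} with hS
  have hgen : ∀ a : A, ρ a θ ∈ NonUnitalAlgebra.adjoin K S :=
    fun a => NonUnitalAlgebra.subset_adjoin K ⟨a, rfl⟩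
  set Sh : Set R := {y : R | ∃ (p : ℤ) (a : A), a ∈ 𝒜 p ∧ ρ a θ = y} with hSh
  have hTSh : NonUnitalAlgebra.adjoin K S ≤ NonUnitalAlgebra.adjoin K Sh := by
    apply NonUnitalAlgebra.adjoin_le
    rintro y ⟨a, rfl⟩
    have hsum : ρ a θ
        = ∑ p ∈ (DirectSum.decompose 𝒜 a).support, ρ (DirectSum.decompose 𝒜 a p : A) θ := by
      conv_lhs => rw [← DirectSum.sum_support_decompose 𝒜 a]
      simp only [map_sum, LinearMap.sum_apply]
    rw [hsum]
    exact sum_mem fun p _ =>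
      NonUnitalAlgebra.subset_adjoin K ⟨p, _, (DirectSum.decompose 𝒜 a p).2, rfl⟩
  have hH : ∀ x ∈ Subsemigroup.closure Sh,
      (∃ p : ℤ, x ∈ ℛ p) ∧ x ∈ NonUnitalAlgebra.adjoin K S := by
    intro x hx
    induction hx using Subsemigroup.closure_induction with
    | mem y hy =>
      obtain ⟨p, a, hap, rfl⟩ := hy
      exact ⟨⟨p, hrep.grad_rel p a hap θ⟩, hgen a⟩
    | mul w u hwc huc ihw ihu =>
      obtain ⟨⟨p, hp⟩, hwT⟩ := ihw
      obtain ⟨⟨q, hq⟩, huT⟩ := ihu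
      exact ⟨⟨p + q, SetLike.mul_mem_graded hp hq⟩, mul_mem hwT huT⟩
  have key : ∀ y ∈ Subsemigroup.closure Sh, ∀ x ∈ Subsemigroup.closure Sh,
      br x y ∈ NonUnitalAlgebra.adjoin K S := by
    intro y hy
    induction hy using Subsemigroup.closure_induction with
    | mem g hg =>
      obtain ⟨q, b, hbq, rfl⟩ := hg
      have hg : ρ b θ ∈ ℛ q := hrep.grad_rel q b hbq θ
      intro x hx
      induction hx using Subsemigroup.closure_induction with
      | mem w hw =>
        obtain ⟨p, a, hap, rfl⟩ := hw
        rw [part1]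
        exact hgen _
      | mul w u hwc huc ihw ihu =>
        obtain ⟨⟨p1, hp1⟩, hwT⟩ := hH w hwc
        obtain ⟨⟨p2, hp2⟩, huT⟩ := hH u huc
        rw [hbr.antisymm (p1 + p2) q (w * u) (ρ b θ) (SetLike.mul_mem_graded hp1 hp2) hg]
        rw [hbr.leibniz q p1 (ρ b θ) w hg hp1 u]
        have h1 : br (ρ b θ) w ∈ NonUnitalAlgebra.adjoin K S := by
          rw [hbr.antisymm q p1 (ρ b θ) w hg hp1]
          exact neg_mem (zsmul_mem ihw _)
        have h2 : br (ρ b θ) u ∈ NonUnitalAlgebra.adjoin K S := by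
          rw [hbr.antisymm q p2 (ρ b θ) u hg hp2]
          exact neg_mem (zsmul_mem ihu _)
        exact neg_mem (zsmul_mem
          (add_mem (mul_mem h1 huT) (zsmul_mem (mul_mem hwT h2) _)) _)
    | mul w u hwc huc ihw ihu =>
      intro x hx
      obtain ⟨⟨p, hp⟩, hxT⟩ := hH x hx
      obtain ⟨⟨q, hq⟩, hwT⟩ := hH w hwc
      obtain ⟨⟨r, hr⟩, huT⟩ := hH u huc
      rw [hbr.leibniz p q x w hp hq u]
      exact add_mem (mul_mem (ihw x hx) huT) (zsmul_mem (mul_mem hwT (ihu x hx)) _)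
  have main : ∀ x ∈ Submodule.span K ((Subsemigroup.closure Sh : Subsemigroup R) : Set R),
      ∀ z ∈ Submodule.span K ((Subsemigroup.closure Sh : Subsemigroup R) : Set R),
      br x z ∈ NonUnitalAlgebra.adjoin K S := by
    intro x hx
    induction hx using Submodule.span_induction with
    | mem w hw =>
      intro z hz
      induction hz using Submodule.span_induction with
      | mem u hu => exact key u hu w hw
      | zero => simp only [map_zero]; exact zero_mem _
      | add u t hu ht ihu iht => rw [map_add]; exact add_mem ihu iht
      | smul c u hu ihu => rw [map_smul]; exact SMulMemClass.smul_mem c ihu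
    | zero =>
      intro z hz
      simp only [map_zero, LinearMap.zero_apply]
      exact zero_mem _
    | add w u hws hus ihw ihu =>
      intro z hz
      rw [map_add, LinearMap.add_apply]
      exact add_mem (ihw z hz) (ihu z hz)
    | smul c w hws ihw =>
      intro z hz
      rw [map_smul, LinearMap.smul_apply]
      exact SMulMemClass.smul_mem c (ihw z hz)
  intro x hx z hz
  have hx' : x ∈ Submodule.span K ((Subsemigroup.closure Sh : Subsemigroup R) : Set R) := by
    rw [← NonUnitalAlgebra.adjoin_eq_span]
    exact hTSh hx
  have hz' : z ∈ Submodule.span K ((Subsemigroup.closure Sh : Subsemigroup R) : Set R) := by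
    rw [← NonUnitalAlgebra.adjoin_eq_span]
    exact hTSh hz
  exact main x hx' z hz'
end

section
/- Let M be a counital coalgebra over a commutative ring K and v a non-degenerate cyclic bilinear form on M (non-degenerate: the left adjoint map ad_v: M → M*, ad_v(α)(β) = v(α⊗β), is an isomorphism). Then v has a unique adjoint element θ ∈ M (i.e. α ↦ v(θ⊗α) equals the counit), and for any graded algebra A the subalgebra A(θ) of A_M generated by {a_θ : a ∈ A} satisfies A(θ) ⊆ A_M^M ∩ A_M^U, where U = U(M*). -/
open TensorProduct

section Aux14

variable {K : Type} [CommRing K] {M : Type} [AddCommGroup M] [Module K M]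

/-- The tail of `hat`: everything except the initial `lTensor M (comul2 μ)`. -/
noncomputable def Psi14 (v : M ⊗[K] M →ₗ[K] K) :
    M ⊗[K] (M ⊗[K] (M ⊗[K] M)) →ₗ[K] M ⊗[K] M :=
  (LinearMap.lTensor M (TensorProduct.lid K M).toLinearMap)
  ∘ₗ (LinearMap.lTensor M (LinearMap.rTensor M v))
  ∘ₗ (LinearMap.lTensor M (TensorProduct.assoc K M M M).symm.toLinearMap)
  ∘ₗ (TensorProduct.assoc K M M (M ⊗[K] M)).toLinearMap
  ∘ₗ (LinearMap.rTensor (M ⊗[K] M) (TensorProduct.comm K M M).toLinearMap)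
  ∘ₗ (TensorProduct.assoc K M M (M ⊗[K] M)).symm.toLinearMap

lemma hat_apply14 (μ : M →ₗ[K] M ⊗[K] M) (v : M ⊗[K] M →ₗ[K] K) (x : M ⊗[K] M) :
    PG.hat μ v x = Psi14 v ((LinearMap.lTensor M (PG.comul2 μ)) x) := rfl

lemma psi14_tmul (v : M ⊗[K] M →ₗ[K] K) (α x y z : M) :
    Psi14 v (α ⊗ₜ[K] (x ⊗ₜ[K] (y ⊗ₜ[K] z))) = v (α ⊗ₜ[K] y) • (x ⊗ₜ[K] z) := by
  simp [Psi14, smul_tmul', tmul_smul]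

lemma flipT_tmul14 (a b : M) : PG.flipT K M (a ⊗ₜ[K] b) = b ⊗ₜ[K] a := rfl

variable {μ : M →ₗ[K] M ⊗[K] M} {v : M ⊗[K] M →ₗ[K] K} {ε : M →ₗ[K] K} {θ : M}

lemma key1_14 (hε : PG.IsCounit μ ε) (hθ : v ∘ₗ TensorProduct.mk K M M θ = ε) (α : M) :
    PG.hat μ v (θ ⊗ₜ[K] α) = μ α := by
  have hv' : ∀ y : M, v (θ ⊗ₜ[K] y) = ε y := fun y => LinearMap.congr_fun hθ y
  have h2 : ∀ t : M ⊗[K] (M ⊗[K] M), Psi14 v (θ ⊗ₜ[K] t)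
      = LinearMap.lTensor M ((TensorProduct.lid K M).toLinearMap ∘ₗ ε.rTensor M) t := by
    intro t
    induction t with
    | zero => simp
    | tmul x s =>
      induction s with
      | zero => simp [tmul_zero]
      | tmul y z => simp [psi14_tmul, hv', smul_tmul', tmul_smul]
      | add s1 s2 h1 h2' => simp only [tmul_add, map_add, h1, h2']
    | add t1 t2 h1 h2' => simp only [tmul_add, map_add, h1, h2']
  rw [hat_apply14, LinearMap.lTensor_tmul, h2]
  have h3 : ∀ s : M ⊗[K] M,
      LinearMap.lTensor M ((TensorProduct.lid K M).toLinearMap ∘ₗ ε.rTensor M)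
        ((LinearMap.lTensor M μ) s) = s := by
    intro s
    induction s with
    | zero => simp
    | tmul a b => simp [(hε b).1]
    | add s1 s2 h1 h2' => simp only [map_add, h1, h2']
  show LinearMap.lTensor M ((TensorProduct.lid K M).toLinearMap ∘ₗ ε.rTensor M)
      ((LinearMap.lTensor M μ) (μ α)) = μ α
  exact h3 (μ α)

lemma key2_14 (hε : PG.IsCounit μ ε) (hv : PG.IsCyclic μ v)
    (hθ : v ∘ₗ TensorProduct.mk K M M θ = ε) (α : M) :
    PG.hat μ v (α ⊗ₜ[K] θ) = PG.flipT K M (μ α) := by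
  replace hv : (PG.hat μ v) ∘ₗ PG.flipT K M = PG.flipT K M ∘ₗ (PG.hat μ v) := hv
  have := LinearMap.congr_fun hv (θ ⊗ₜ[K] α)
  simp only [LinearMap.comp_apply, flipT_tmul14] at this
  rw [this, key1_14 hε hθ]

lemma key3_14 (hε : PG.IsCounit μ ε) (hv : PG.IsCyclic μ v)
    (hθ : v ∘ₗ TensorProduct.mk K M M θ = ε) :
    μ θ = PG.flipT K M (μ θ) := by
  rw [← key2_14 hε hv hθ θ, key1_14 hε hθ θ]

lemma keyM_14 (hε : PG.IsCounit μ ε) (hv : PG.IsCyclic μ v)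
    (hθ : v ∘ₗ TensorProduct.mk K M M θ = ε) (φ : M →ₗ[K] K) :
    PG.innerCoder μ φ θ = 0 := by
  have hflip : ∀ s : M ⊗[K] M,
      (TensorProduct.rid K M) ((LinearMap.lTensor M φ) (PG.flipT K M s))
        = (TensorProduct.lid K M) ((φ.rTensor M) s) := by
    intro s
    induction s with
    | zero => simp
    | tmul a b => simp [flipT_tmul14]
    | add s1 s2 h1 h2' => simp only [map_add, h1, h2']
  have h := hflip (μ θ)
  rw [← key3_14 hε hv hθ] at h
  simp only [PG.innerCoder, LinearMap.sub_apply, LinearMap.comp_apply,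
    LinearEquiv.coe_coe] at *
  rw [h, sub_self]

lemma keyU_14 (hμ : PG.Coassoc μ) (hε : PG.IsCounit μ ε) (hv : PG.IsCyclic μ v)
    (hθ : v ∘ₗ TensorProduct.mk K M M θ = ε) (u w : M →ₗ[K] K)
    (hconv : PG.conv μ u w = ε) :
    PG.innerAct μ w u θ = θ := by
  have expand : PG.innerAct μ w u θ
      = (TensorProduct.rid K M) ((TensorProduct.lid K (M ⊗[K] K))
          ((TensorProduct.map w (LinearMap.lTensor M u))
            ((LinearMap.lTensor M μ) (μ θ)))) := rfl
  rw [expand, key3_14 hε hv hθ]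
  have step2 : ∀ s : M ⊗[K] M,
      (TensorProduct.rid K M) ((TensorProduct.lid K (M ⊗[K] K))
          ((TensorProduct.map w (LinearMap.lTensor M u))
            ((LinearMap.lTensor M μ) (PG.flipT K M s))))
        = (TensorProduct.rid K M)
            ((TensorProduct.map
              ((TensorProduct.rid K M).toLinearMap ∘ₗ LinearMap.lTensor M u ∘ₗ μ) w) s) := by
    have st1 : ∀ (b : M) (t : M ⊗[K] M),
        (TensorProduct.rid K M) ((TensorProduct.lid K (M ⊗[K] K))
            ((TensorProduct.map w (LinearMap.lTensor M u)) (b ⊗ₜ[K] t)))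
          = w b • (TensorProduct.rid K M) (LinearMap.lTensor M u t) := by
      intro b t
      induction t with
      | zero => simp [tmul_zero]
      | tmul y z => simp [smul_smul, mul_comm]
      | add t1 t2 h1 h2' => simp only [tmul_add, map_add, smul_add, h1, h2']
    intro s
    induction s with
    | zero => simp
    | tmul a b =>
      rw [flipT_tmul14, LinearMap.lTensor_tmul, st1]
      simp [smul_smul, mul_comm]
    | add s1 s2 h1 h2' => simp only [map_add, h1, h2']
  rw [step2]
  have step3 : ∀ s : M ⊗[K] M,
      (TensorProduct.rid K M)
          ((TensorProduct.map
            ((TensorProduct.rid K M).toLinearMap ∘ₗ LinearMap.lTensor M u ∘ₗ μ) w) s)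
        = ((TensorProduct.rid K M).toLinearMap
            ∘ₗ LinearMap.lTensor M (LinearMap.mul' K K ∘ₗ TensorProduct.map u w))
            ((TensorProduct.assoc K M M M) ((μ.rTensor M) s)) := by
    have st2 : ∀ (t : M ⊗[K] M) (b : M),
        ((TensorProduct.rid K M).toLinearMap
            ∘ₗ LinearMap.lTensor M (LinearMap.mul' K K ∘ₗ TensorProduct.map u w))
            ((TensorProduct.assoc K M M M) (t ⊗ₜ[K] b))
          = w b • (TensorProduct.rid K M) (LinearMap.lTensor M u t) := by
      intro t b
      induction t with
      | zero => simp [zero_tmul]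
      | tmul x y => simp [smul_smul, mul_comm]
      | add t1 t2 h1 h2' => simp only [add_tmul, map_add, smul_add, h1, h2']
    intro s
    induction s with
    | zero => simp
    | tmul a b =>
      rw [LinearMap.rTensor_tmul, st2]
      simp [smul_smul, mul_comm]
    | add s1 s2 h1 h2' => simp only [map_add, h1, h2']
  rw [step3]
  have hco : (TensorProduct.assoc K M M M) ((μ.rTensor M) (μ θ))
      = (μ.lTensor M) (μ θ) := LinearMap.congr_fun hμ θ
  rw [hco]
  have step4 : ∀ s : M ⊗[K] M,
      ((TensorProduct.rid K M).toLinearMap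
          ∘ₗ LinearMap.lTensor M (LinearMap.mul' K K ∘ₗ TensorProduct.map u w))
          ((LinearMap.lTensor M μ) s)
        = (TensorProduct.rid K M) ((LinearMap.lTensor M (PG.conv μ u w)) s) := by
    intro s
    induction s with
    | zero => simp
    | tmul a b => simp [PG.conv]
    | add s1 s2 h1 h2' => simp only [map_add, h1, h2']
  show ((TensorProduct.rid K M).toLinearMap
      ∘ₗ LinearMap.lTensor M (LinearMap.mul' K K ∘ₗ TensorProduct.map u w))
      ((LinearMap.lTensor M μ) (μ θ)) = θ
  rw [step4, hconv]
  exact (hε θ).2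

end Aux14

/-- a non-degenerate cyclic bilinear form `v` on a counital coalgebra `M` has a
unique adjoint element `θ ∈ M` (with `v(θ ⊗ −)` equal to the counit), and for any graded
algebra `A` the subalgebra `A(θ) ⊆ A_M` generated by `{a_θ}` is contained in
`A_M^M ∩ A_M^U`. -/
theorem statement_14 {K A M R : Type} [CommRing K]
    [NonUnitalRing A] [Module K A] [SMulCommClass K A A] [IsScalarTower K A A]
    (𝒜 : ℤ → Submodule K A) [SetLike.GradedMul 𝒜] [DirectSum.Decomposition 𝒜]
    [AddCommGroup M] [Module K M] (μ : M →ₗ[K] M ⊗[K] M) (hμ : PG.Coassoc μ)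
    (ε : M →ₗ[K] K) (hε : PG.IsCounit μ ε)
    [NonUnitalRing R] [Module K R] [SMulCommClass K R R] [IsScalarTower K R R]
    (ℛ : ℤ → Submodule K R) [SetLike.GradedMul ℛ] [DirectSum.Decomposition ℛ]
    (ρ : A →ₗ[K] M →ₗ[K] R) (hrep : PG.IsRepAlgebra μ 𝒜 ℛ ρ)
    (v : M ⊗[K] M →ₗ[K] K) (hv : PG.IsCyclic μ v)
    (hnd : Function.Bijective fun α : M => v ∘ₗ TensorProduct.mk K M M α) :
    (∃! θ : M, v ∘ₗ TensorProduct.mk K M M θ = ε) ∧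
    (∀ θ : M, v ∘ₗ TensorProduct.mk K M M θ = ε →
      ∀ x ∈ NonUnitalAlgebra.adjoin K {y : R | ∃ a : A, ρ a θ = y},
        x ∈ PG.fixMSet μ ℛ ρ ∧ x ∈ PG.fixUSet μ ε ρ) := by
  constructor
  · exact hnd.existsUnique ε
  · intro θ hθ x hx
    constructor
    · -- x ∈ fixMSet
      intro φ D hD hDρ
      have hgen : ∀ a : A, D (ρ a θ) = 0 := by
        intro a
        rw [hDρ, keyM_14 hε hv hθ φ]
        simp
      induction hx using NonUnitalAlgebra.adjoin_induction with
      | mem y hy =>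
        obtain ⟨a, rfl⟩ := hy
        exact hgen a
      | add y z _ _ hy hz => rw [map_add, hy, hz, add_zero]
      | zero => exact map_zero D
      | mul y z _ _ hy hz => rw [hD.2, hy, hz, zero_mul, mul_zero, add_zero]
      | smul r y _ hy => rw [map_smul, hy, smul_zero]
    · -- x ∈ fixUSet
      intro u w hc1 hc2 F hF
      have hgen : ∀ a : A, F (ρ a θ) = ρ a θ := by
        intro a
        rw [hF, keyU_14 hμ hε hv hθ u w hc1]
      induction hx using NonUnitalAlgebra.adjoin_induction with
      | mem y hy =>
        obtain ⟨a, rfl⟩ := hy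
        exact hgen a
      | add y z _ _ hy hz => rw [map_add, hy, hz]
      | zero => exact map_zero F
      | mul y z _ _ hy hz => rw [map_mul, hy, hz]
      | smul r y _ hy => rw [map_smul, hy]
end
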